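/- arXiv:1312.6738 — 6 statements merged into one kernel-verified Lean document; each statement's English description precedes it below -/
import Mathlib

section
/- Let n ≥ 3 be an odd integer and G = D_n the dihedral group of order 2n. Then there is an isomorphism of ℤ[G]-modules M̃₊ ⊕ ℤ ≅ ℤ[G/⟨σ⟩] ⊕ ℤ[G/⟨τ⟩]. -/
open DihedralGroup

section HKYAux

variable (n : ℕ) [NeZero n] (m : ℤ)

/-- The forward map for HKY Theorem 3.4. -/
def hkyFwd : (((ZMod n → ℤ) × ℤ) × ℤ) →ₗ[ℤ] (ℤ × ℤ) × (ZMod n → ℤ) where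
  toFun p := ((∑ i, p.1.1 i + (m + 1) * p.1.2 + p.2, ∑ i, p.1.1 i + m * p.1.2 + p.2),
    fun i => p.1.1 i - (∑ i, p.1.1 i + m * p.1.2 + p.2))
  map_add' p q := by
    ext <;> simp [Finset.sum_add_distrib] <;> ring
  map_smul' c p := by
    ext <;> simp [smul_eq_mul, Finset.mul_sum, mul_sub, mul_add] <;> ring

/-- The backward map for HKY Theorem 3.4. -/
def hkyBwd : ((ℤ × ℤ) × (ZMod n → ℤ)) →ₗ[ℤ] (((ZMod n → ℤ) × ℤ) × ℤ) where
  toFun p := (((fun i => p.2 i + p.1.2), p.1.1 - p.1.2),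
    -m * (p.1.1 + p.1.2) - ∑ i, p.2 i)
  map_add' p q := by
    ext <;> simp [Finset.sum_add_distrib] <;> ring
  map_smul' c p := by
    ext <;> simp [smul_eq_mul, Finset.mul_sum, mul_sub, mul_add] <;> ring

end HKYAux

/-- **Hoshi–Kang–Yamasaki, Theorem 3.4.**
Let `n ≥ 3` be an odd integer and `G = Dₙ` the dihedral group of order `2n`, with
`σ = r 1` and `τ = sr 0`.  `ρM` is the `G`-lattice `M̃₊` (free on `w₀,…,w_{n-1}, w` with
`σ·wᵢ = w_{i+1}`, `σ·w = w`, `τ·wᵢ = w_{n-i}`, `τ·w = -w + Σ wᵢ`), `ρA` is `ℤ[G/⟨σ⟩]` and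
`ρB` is `ℤ[G/⟨τ⟩]`.  Then `M̃₊ ⊕ ℤ ≅ ℤ[G/⟨σ⟩] ⊕ ℤ[G/⟨τ⟩]` as `ℤ[G]`-modules. -/
theorem stmt0 (n : ℕ) (hn : 3 ≤ n) (hodd : Odd n) [NeZero n]
    (ρM : Representation ℤ (DihedralGroup n) ((ZMod n → ℤ) × ℤ))
    (hMσ : ∀ i : ZMod n, ρM (r 1) (Pi.single i 1, 0) = (Pi.single (i + 1) 1, 0))
    (hMσw : ρM (r 1) (0, 1) = (0, 1))
    (hMτ : ∀ i : ZMod n, ρM (sr 0) (Pi.single i 1, 0) = (Pi.single (-i) 1, 0))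
    (hMτw : ρM (sr 0) (0, 1) = (∑ i : ZMod n, Pi.single i 1, -1))
    (ρA : Representation ℤ (DihedralGroup n) (ℤ × ℤ))
    (hAσ : ∀ x : ℤ × ℤ, ρA (r 1) x = x)
    (hAτ : ∀ x : ℤ × ℤ, ρA (sr 0) x = (x.2, x.1))
    (ρB : Representation ℤ (DihedralGroup n) (ZMod n → ℤ))
    (hBσ : ∀ i : ZMod n, ρB (r 1) (Pi.single i 1) = Pi.single (i + 1) 1)
    (hBτ : ∀ i : ZMod n, ρB (sr 0) (Pi.single i 1) = Pi.single (-i) 1) :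
    ∃ e : (((ZMod n → ℤ) × ℤ) × ℤ) ≃ₗ[ℤ] (ℤ × ℤ) × (ZMod n → ℤ),
      ∀ (g : DihedralGroup n) (x : ((ZMod n → ℤ) × ℤ) × ℤ),
        e (ρM g x.1, x.2) = (ρA g (e x).1, ρB g (e x).2) := by
  obtain ⟨m₀, hm₀⟩ := hodd
  set m : ℤ := (m₀ : ℤ) with hmdef
  have hnm : (n : ℤ) = 2 * m + 1 := by rw [hm₀]; push_cast; ring
  have hsum_const : ∀ c : ℤ, (∑ _i : ZMod n, c) = n * c := by
    intro c; rw [Finset.sum_const]; simp [ZMod.card]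
  have hshift : ∀ v : ZMod n → ℤ, ∑ i, v (i - 1) = ∑ i, v i :=
    fun v => Fintype.sum_equiv (Equiv.subRight (1 : ZMod n)) _ _ (fun i => rfl)
  have hneg : ∀ v : ZMod n → ℤ, ∑ i, v (-i) = ∑ i, v i :=
    fun v => Fintype.sum_equiv (Equiv.neg (ZMod n)) _ _ (fun i => rfl)
  -- decompose arbitrary vectors
  have hvec : ∀ v : ZMod n → ℤ, v = ∑ i, v i • (Pi.single i 1 : ZMod n → ℤ) := by
    intro v
    have h1 : ∀ i, v i • (Pi.single i 1 : ZMod n → ℤ) = Pi.single i (v i) := by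
      intro i; ext j; by_cases h : j = i <;> simp [Pi.single_apply, h]
    simp_rw [h1]
    exact (Finset.univ_sum_single v).symm
  have hpair : ∀ x : (ZMod n → ℤ) × ℤ,
      x = (∑ i, x.1 i • ((Pi.single i 1 : ZMod n → ℤ), (0:ℤ)))
        + x.2 • ((0 : ZMod n → ℤ), (1:ℤ)) := by
    intro x
    apply Prod.ext
    · rw [Prod.fst_add, Prod.fst_sum]
      simp only [Prod.smul_fst, Prod.smul_snd]
      rw [← hvec x.1]
      simp
    · rw [Prod.snd_add, Prod.snd_sum]
      simp
  -- pointwise shift sums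
  have hsingle_shift : ∀ (v : ZMod n → ℤ) (j : ZMod n),
      (∑ i, v i • (Pi.single (i + 1) (1:ℤ) : ZMod n → ℤ)) j = v (j - 1) := by
    intro v j
    rw [Finset.sum_apply]
    have h1 : ∀ i : ZMod n, (v i • (Pi.single (i + 1) (1:ℤ) : ZMod n → ℤ)) j
        = if i = j - 1 then v i else 0 := by
      intro i
      by_cases h : i = j - 1
      · subst h; simp [Pi.single_apply]
      · have h' : j ≠ i + 1 := fun hj => h (by rw [hj]; simp)
        simp [Pi.single_apply, h, h']
    simp_rw [h1]
    simp
  have hsingle_neg : ∀ (v : ZMod n → ℤ) (j : ZMod n),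
      (∑ i, v i • (Pi.single (-i) (1:ℤ) : ZMod n → ℤ)) j = v (-j) := by
    intro v j
    rw [Finset.sum_apply]
    have h1 : ∀ i : ZMod n, (v i • (Pi.single (-i) (1:ℤ) : ZMod n → ℤ)) j
        = if i = -j then v i else 0 := by
      intro i
      by_cases h : i = -j
      · subst h; simp [Pi.single_apply]
      · have h' : j ≠ -i := fun hj => h (by rw [hj]; simp)
        simp [Pi.single_apply, h, h']
    simp_rw [h1]
    simp
  -- action formulas for generators
  have hMr : ∀ x : (ZMod n → ℤ) × ℤ, ρM (r 1) x = ((fun j => x.1 (j - 1)), x.2) := by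
    intro x
    conv_lhs => rw [hpair x]
    rw [map_add, map_sum, map_smul]
    simp_rw [map_smul, hMσ, hMσw]
    apply Prod.ext
    · rw [Prod.fst_add, Prod.fst_sum]
      simp only [Prod.smul_fst, Prod.smul_snd]
      funext j
      rw [Pi.add_apply, hsingle_shift x.1 j]
      simp
    · rw [Prod.snd_add, Prod.snd_sum]
      simp
  have hMs : ∀ x : (ZMod n → ℤ) × ℤ,
      ρM (sr 0) x = ((fun j => x.1 (-j) + x.2), -x.2) := by
    intro x
    conv_lhs => rw [hpair x]
    rw [map_add, map_sum, map_smul]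
    simp_rw [map_smul, hMτ, hMτw]
    apply Prod.ext
    · rw [Prod.fst_add, Prod.fst_sum]
      simp only [Prod.smul_fst, Prod.smul_snd]
      funext j
      rw [Pi.add_apply, hsingle_neg x.1 j]
      simp [Finset.sum_apply, Pi.single_apply]
    · rw [Prod.snd_add, Prod.snd_sum]
      simp
  have hBr : ∀ v : ZMod n → ℤ, ρB (r 1) v = fun j => v (j - 1) := by
    intro v
    conv_lhs => rw [hvec v]
    rw [map_sum]
    simp_rw [map_smul, hBσ]
    funext j
    exact hsingle_shift v j
  have hBs : ∀ v : ZMod n → ℤ, ρB (sr 0) v = fun j => v (-j) := by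
    intro v
    conv_lhs => rw [hvec v]
    rw [map_sum]
    simp_rw [map_smul, hBτ]
    funext j
    exact hsingle_neg v j
  -- the linear equivalence
  have h1 : (hkyFwd n m) ∘ₗ (hkyBwd n m) = LinearMap.id := by
    apply LinearMap.ext
    intro p
    obtain ⟨⟨pa, pb⟩, y⟩ := p
    have hT : ∑ i, (y i + pb) = (∑ i, y i) + n * pb := by
      rw [Finset.sum_add_distrib, hsum_const]
    ext
    · show (∑ i, (y i + pb)) + (m + 1) * (pa - pb) + (-m * (pa + pb) - ∑ i, y i) = pa
      rw [hT]; linear_combination pb * hnm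
    · show (∑ i, (y i + pb)) + m * (pa - pb) + (-m * (pa + pb) - ∑ i, y i) = pb
      rw [hT]; linear_combination pb * hnm
    · rename_i j
      show (y j + pb) - ((∑ i, (y i + pb)) + m * (pa - pb) + (-m * (pa + pb) - ∑ i, y i)) = y j
      rw [hT]; linear_combination (-pb) * hnm
  have h2 : (hkyBwd n m) ∘ₗ (hkyFwd n m) = LinearMap.id := by
    apply LinearMap.ext
    intro p
    obtain ⟨⟨x, u⟩, z⟩ := p
    ext
    · rename_i j
      show (x j - ((∑ i, x i) + m * u + z)) + ((∑ i, x i) + m * u + z) = x j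
      ring
    · show ((∑ i, x i) + (m + 1) * u + z) - ((∑ i, x i) + m * u + z) = u
      ring
    · show -m * (((∑ i, x i) + (m + 1) * u + z) + ((∑ i, x i) + m * u + z))
        - (∑ i, (x i - ((∑ i, x i) + m * u + z))) = z
      rw [Finset.sum_sub_distrib, hsum_const]
      linear_combination ((∑ i, x i) + m * u + z) * hnm
  refine ⟨LinearEquiv.ofLinear (hkyFwd n m) (hkyBwd n m) h1 h2, ?_⟩
  set E := LinearEquiv.ofLinear (hkyFwd n m) (hkyBwd n m) h1 h2 with hE
  have hEapp : ∀ p : ((ZMod n → ℤ) × ℤ) × ℤ, E p =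
      ((∑ i, p.1.1 i + (m + 1) * p.1.2 + p.2, ∑ i, p.1.1 i + m * p.1.2 + p.2),
       fun i => p.1.1 i - (∑ i, p.1.1 i + m * p.1.2 + p.2)) := fun p => rfl
  -- the property is multiplicative
  set P : DihedralGroup n → Prop := fun g =>
    ∀ x : ((ZMod n → ℤ) × ℤ) × ℤ, E (ρM g x.1, x.2) = (ρA g (E x).1, ρB g (E x).2) with hP
  have hPone : P 1 := by
    intro x
    simp [map_one, Module.End.one_apply]
  have hPmul : ∀ g h, P g → P h → P (g * h) := by
    intro g h hg hh x
    have e1 : ρM (g * h) x.1 = ρM g (ρM h x.1) := by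
      rw [map_mul]; rfl
    have e2 : ρA (g * h) (E x).1 = ρA g (ρA h (E x).1) := by
      rw [map_mul]; rfl
    have e3 : ρB (g * h) (E x).2 = ρB g (ρB h (E x).2) := by
      rw [map_mul]; rfl
    rw [e1, e2, e3]
    have e4 := hg ((ρM h x.1, x.2))
    rw [e4, hh x]
  -- generators
  have hPr : P (r 1) := by
    intro x
    obtain ⟨⟨xv, u⟩, z⟩ := x
    show E (ρM (r 1) (xv, u), z) = (ρA (r 1) (E ((xv, u), z)).1, ρB (r 1) (E ((xv, u), z)).2)
    rw [hMr, hAσ, hBr, hEapp, hEapp]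
    simp only
    have hs : ∑ i, xv (i - 1) = ∑ i, xv i := hshift xv
    refine Prod.ext (Prod.ext ?_ ?_) ?_
    · show (∑ i, xv (i - 1)) + (m + 1) * u + z = (∑ i, xv i) + (m + 1) * u + z
      rw [hs]
    · show (∑ i, xv (i - 1)) + m * u + z = (∑ i, xv i) + m * u + z
      rw [hs]
    · funext j
      show xv (j - 1) - ((∑ i, xv (i - 1)) + m * u + z)
        = xv (j - 1) - ((∑ i, xv i) + m * u + z)
      rw [hs]
  have hPs : P (sr 0) := by
    intro x
    obtain ⟨⟨xv, u⟩, z⟩ := x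
    show E (ρM (sr 0) (xv, u), z) = (ρA (sr 0) (E ((xv, u), z)).1, ρB (sr 0) (E ((xv, u), z)).2)
    rw [hMs, hAτ, hBs, hEapp, hEapp]
    simp only
    have hs : ∑ i, (xv (-i) + u) = (∑ i, xv i) + n * u := by
      rw [Finset.sum_add_distrib, hneg, hsum_const]
    refine Prod.ext (Prod.ext ?_ ?_) ?_
    · show (∑ i, (xv (-i) + u)) + (m + 1) * (-u) + z = (∑ i, xv i) + m * u + z
      rw [hs]; linear_combination u * hnm
    · show (∑ i, (xv (-i) + u)) + m * (-u) + z = (∑ i, xv i) + (m + 1) * u + z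
      rw [hs]; linear_combination u * hnm
    · funext j
      show (xv (-j) + u) - ((∑ i, (xv (-i) + u)) + m * (-u) + z)
        = xv (-j) - ((∑ i, xv i) + m * u + z)
      rw [hs]; linear_combination (-u) * hnm
  have hPpow : ∀ k : ℕ, P (r 1 ^ k) := by
    intro k
    induction k with
    | zero => simpa using hPone
    | succ k ih => rw [pow_succ]; exact hPmul _ _ ih hPr
  intro g
  rcases g with j | j
  · have hj : (r j : DihedralGroup n) = r 1 ^ j.val := by
      rw [r_one_pow]; congr 1; simp [ZMod.natCast_val, ZMod.cast_id]
    rw [hj]; exact hPpow j.val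
  · have hj : (sr j : DihedralGroup n) = sr 0 * r 1 ^ j.val := by
      rw [r_one_pow, sr_mul_r]
      congr 1; simp [ZMod.natCast_val, ZMod.cast_id]
    rw [hj]; exact hPmul _ _ hPs (hPpow j.val)
end

section
/- Let n ≥ 3 be an odd integer and G = D_n the dihedral group of order 2n. Then there is an isomorphism of ℤ[G]-modules M̃₋ ⊕ ℤ[G/⟨τ⟩] ≅ ℤ[G] ⊕ ℤ. -/
open DihedralGroup

namespace HKY35
def eps (n : ℕ) : ℤ := if n % 4 = 1 then 1 else -1
def gam (n : ℕ) : ℤ := (eps n - n) / 4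
def cc (n : ℕ) (v : ℕ) : ℤ := ((-1)^v * ((n:ℤ) - 2*v) - eps n) / 4
def ccz (n : ℕ) [NeZero n] (d : ZMod n) : ℤ := cc n d.val

lemma eps_cases (n : ℕ) (hodd : Odd n) :
    ((n:ℤ) % 4 = 1 ∧ eps n = 1) ∨ ((n:ℤ) % 4 = 3 ∧ eps n = -1) := by
  obtain ⟨t, rfl⟩ := hodd
  rcases Nat.even_or_odd t with ⟨s, rfl⟩ | ⟨s, rfl⟩
  · left; exact ⟨by push_cast; omega, by simp only [eps, if_pos (by omega : (2*(s+s)+1) % 4 = 1)]⟩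
  · right; exact ⟨by push_cast; omega, by simp only [eps]; rw [if_neg (by omega)]⟩

lemma eps_sq (n : ℕ) : eps n * eps n = 1 := by unfold eps; split <;> norm_num

lemma cc_dvd (n : ℕ) (hodd : Odd n) (v : ℕ) :
    (4:ℤ) ∣ ((-1)^v * ((n:ℤ) - 2*v) - eps n) := by
  have h := eps_cases n hodd
  rcases Nat.even_or_odd v with hv | hv
  · rw [hv.neg_one_pow]; obtain ⟨s, rfl⟩ := hv; omega
  · rw [hv.neg_one_pow]; obtain ⟨s, rfl⟩ := hv; push_cast; omega

lemma cc4 (n : ℕ) (hodd : Odd n) (v : ℕ) :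
    4 * cc n v = (-1)^v * ((n:ℤ) - 2*v) - eps n :=
  Int.mul_ediv_cancel' (cc_dvd n hodd v)

lemma gam4 (n : ℕ) (hodd : Odd n) : 4 * gam n = eps n - n := by
  apply Int.mul_ediv_cancel'
  have h := eps_cases n hodd
  omega

lemma val_add_one (n : ℕ) [NeZero n] (d : ZMod n) : (d + 1).val = (d.val + 1) % n := by
  rw [ZMod.val_add, ZMod.val_one_eq_one_mod]
  rcases n with _ | _ | n
  · exact absurd rfl (NeZero.ne 0)
  · omega
  · simp [Nat.mod_self]

lemma val_sub_one (n : ℕ) [NeZero n] (hn : 1 < n) (d : ZMod n) :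
    (d - 1).val = (d.val + (n - 1)) % n := by
  have h1 : ((n - 1 : ℕ) : ZMod n) = -1 := by
    rw [Nat.cast_sub (by omega : 1 ≤ n), ZMod.natCast_self, Nat.cast_one]; ring
  have : d - 1 = d + ((n-1 : ℕ) : ZMod n) := by rw [h1]; ring
  rw [this, ZMod.val_add, ZMod.val_cast_of_lt (by omega)]

lemma recA (n : ℕ) [NeZero n] (hn : 3 ≤ n) (hodd : Odd n) (d : ZMod n) :
    2 * ccz n d + ccz n (d - 1) + ccz n (d + 1) + eps n
      = if d = 0 then 1 else 0 := by
  have hv : d.val < n := ZMod.val_lt d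
  have hp : (d + 1).val = (d.val + 1) % n := val_add_one n d
  have hm : (d - 1).val = (d.val + (n - 1)) % n := val_sub_one n (by omega) d
  have hd0 : (d = 0) ↔ (d.val = 0) := ⟨fun h => h ▸ ZMod.val_zero, fun h => (ZMod.val_eq_zero d).mp h⟩
  have four_inj : ∀ x y : ℤ, 4 * x = 4 * y → x = y := by intro x y h; omega
  have hev : Even (n - 1) := by obtain ⟨t, rfl⟩ := hodd; exact ⟨t, by omega⟩
  have h4 := eps_cases n hodd
  unfold ccz
  rcases eq_or_ne d.val 0 with h0 | h0
  · have hb : (d - 1).val = n - 1 := by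
      rw [hm, h0, Nat.zero_add, Nat.mod_eq_of_lt (by omega)]
    have hc : (d + 1).val = 1 := by rw [hp, h0, Nat.mod_eq_of_lt (by omega)]
    rw [h0, hb, hc, if_pos (hd0.mpr h0)]
    apply four_inj
    have e1 := cc4 n hodd 0
    have e2 := cc4 n hodd (n-1)
    have e3 := cc4 n hodd 1
    rw [hev.neg_one_pow] at e2
    norm_num at e1 e3
    have hcast : ((n - 1 : ℕ) : ℤ) = (n : ℤ) - 1 := by
      rw [Nat.cast_sub (by omega : 1 ≤ n)]; norm_num
    rw [hcast] at e2
    omega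
  · rcases eq_or_ne d.val (n - 1) with hl | hl
    · have hb : (d - 1).val = n - 2 := by
        have h2 : n - 1 + (n - 1) = n + (n - 2) := by omega
        rw [hm, hl, h2, Nat.add_mod_left, Nat.mod_eq_of_lt (by omega)]
      have hc : (d + 1).val = 0 := by
        have h2 : n - 1 + 1 = n := by omega
        rw [hp, hl, h2, Nat.mod_self]
      rw [hl, hb, hc, if_neg (fun h => h0 (hd0.mp h))]
      apply four_inj
      have e1 := cc4 n hodd (n-1)
      have e2 := cc4 n hodd (n-2)
      have e3 := cc4 n hodd 0
      have hod : Odd (n - 2) := by obtain ⟨t, rfl⟩ := hodd; exact ⟨t - 1, by omega⟩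
      rw [hev.neg_one_pow] at e1
      rw [hod.neg_one_pow] at e2
      norm_num at e3
      have hc1 : ((n - 1 : ℕ) : ℤ) = (n : ℤ) - 1 := by
        rw [Nat.cast_sub (by omega : 1 ≤ n)]; norm_num
      have hc2 : ((n - 2 : ℕ) : ℤ) = (n : ℤ) - 2 := by
        rw [Nat.cast_sub (by omega : 2 ≤ n)]; norm_num
      rw [hc1] at e1; rw [hc2] at e2
      omega
    · have h1 : 1 ≤ d.val := by omega
      have hb : (d - 1).val = d.val - 1 := by
        have h2 : d.val + (n - 1) = n + (d.val - 1) := by omega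
        rw [hm, h2, Nat.add_mod_left, Nat.mod_eq_of_lt (by omega)]
      have hc : (d + 1).val = d.val + 1 := by rw [hp, Nat.mod_eq_of_lt (by omega)]
      rw [hb, hc, if_neg (fun h => h0 (hd0.mp h))]
      obtain ⟨w, hw⟩ : ∃ w, d.val = w + 1 := ⟨d.val - 1, by omega⟩
      rw [hw]
      have hsub : w + 1 - 1 = w := rfl
      rw [hsub]
      apply four_inj
      have e1 := cc4 n hodd (w+1)
      have e2 := cc4 n hodd w
      have e3 := cc4 n hodd (w+1+1)
      have p1 : ((-1:ℤ))^(w+1) = -(-1:ℤ)^w := by rw [pow_succ]; ring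
      have p2 : ((-1:ℤ))^(w+1+1) = (-1:ℤ)^w := by rw [pow_succ, pow_succ]; ring
      rw [p1] at e1
      rw [p2] at e3
      push_cast at e1 e2 e3
      linear_combination 2*e1 + e2 + e3

lemma sum_alt (n : ℕ) (k : ℕ) :
    ∑ v ∈ Finset.range k, (-1:ℤ)^v * ((n:ℤ) - 2*v)
      = if Even k then (k:ℤ) else (n:ℤ) - k + 1 := by
  induction k with
  | zero => simp
  | succ k ih =>
    rw [Finset.sum_range_succ, ih]
    rcases Nat.even_or_odd k with hk | hk
    · rw [if_pos hk, hk.neg_one_pow, if_neg (by simp [Nat.even_add_one, hk])]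
      push_cast; ring
    · rw [if_neg (by simp [Nat.not_even_iff_odd.mpr hk]), hk.neg_one_pow,
        if_pos (by simpa [Nat.even_add_one] using Nat.not_even_iff_odd.mpr hk)]
      push_cast; ring

lemma sumB (n : ℕ) [NeZero n] (hodd : Odd n) :
    ∑ d : ZMod n, ccz n d = eps n * gam n := by
  obtain ⟨k, rfl⟩ : ∃ k, n = k + 1 := ⟨n - 1, by have := NeZero.pos n; omega⟩
  have h1 : ∑ d : ZMod (k+1), ccz (k+1) d = ∑ v ∈ Finset.range (k+1), cc (k+1) v :=
    Fin.sum_univ_eq_sum_range (fun v => cc (k+1) v) (k+1)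
  rw [h1]
  have h2 : 4 * ∑ v ∈ Finset.range (k+1), cc (k+1) v
      = ∑ v ∈ Finset.range (k+1), (4 * cc (k+1) v) := Finset.mul_sum _ _ _
  have h3 : ∑ v ∈ Finset.range (k+1), (4 * cc (k+1) v)
      = (∑ v ∈ Finset.range (k+1), (-1:ℤ)^v * (((k+1:ℕ):ℤ) - 2*v)) - (k+1) * eps (k+1) := by
    have := Finset.sum_congr rfl (fun v (_ : v ∈ Finset.range (k+1)) => cc4 (k+1) hodd v)
    rw [this, Finset.sum_sub_distrib, Finset.sum_const, Finset.card_range, nsmul_eq_mul]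
    push_cast; ring
  have h4 := sum_alt (k+1) (k+1)
  rw [if_neg (by simpa [Nat.not_even_iff_odd] using hodd)] at h4
  have h5 : 4 * (eps (k+1) * gam (k+1)) = eps (k+1) * (4 * gam (k+1)) := by ring
  have h6 := gam4 (k+1) hodd
  have h7 := eps_sq (k+1)
  have key : 4 * ∑ v ∈ Finset.range (k+1), cc (k+1) v = 4 * (eps (k+1) * gam (k+1)) := by
    rw [h2, h3, h4, h5, h6]
    push_cast
    nlinarith [h7]
  omega

open DihedralGroup


variable {n : ℕ} [NeZero n]

lemma smul_single {α : Type*} [DecidableEq α] (i : α) (c : ℤ) :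
    c • (Pi.single i (1:ℤ) : α → ℤ) = Pi.single i c := by
  funext k
  by_cases hk : k = i <;> simp [Pi.single_apply, hk]

lemma sum_single_eq {α : Type*} [Fintype α] [DecidableEq α] (f : α → ℤ) :
    ∑ i, f i • (Pi.single i (1:ℤ) : α → ℤ) = f := by
  simp_rw [smul_single]
  exact Finset.univ_sum_single f

lemma shift_single (a : ZMod n) (f : ZMod n → ℤ) :
    ∑ i, f i • (Pi.single (i + a) (1:ℤ) : ZMod n → ℤ) = fun k => f (k - a) := by
  rw [← sum_single_eq (fun k => f (k - a))]
  exact Fintype.sum_equiv (Equiv.addRight a) _ _ (fun i => by simp)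

lemma neg_single (f : ZMod n → ℤ) :
    ∑ i, f i • (Pi.single (-i) (1:ℤ) : ZMod n → ℤ) = fun k => f (-k) := by
  rw [← sum_single_eq (fun k => f (-k))]
  exact Fintype.sum_equiv (Equiv.neg (ZMod n)) _ _ (fun i => by simp)


lemma sum_shift (h : ZMod n → ℤ) (a : ZMod n) : ∑ j, h (j + a) = ∑ j, h j :=
  Fintype.sum_equiv (Equiv.addRight a) _ _ (fun j => by simp)

lemma sum_shift' (h : ZMod n → ℤ) (a : ZMod n) : ∑ j, h (j - a) = ∑ j, h j :=
  Fintype.sum_equiv (Equiv.subRight a) _ _ (fun j => by simp)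

lemma sum_neg (h : ZMod n → ℤ) : ∑ j, h (-j) = ∑ j, h j :=
  Fintype.sum_equiv (Equiv.neg (ZMod n)) _ _ (fun j => by simp)

lemma sum_sub_left (h : ZMod n → ℤ) (a : ZMod n) : ∑ j, h (a - j) = ∑ j, h j :=
  Fintype.sum_equiv (Equiv.subLeft a) _ _ (fun j => by simp)

lemma M_decomp (f : ZMod n → ℤ) (m : ℤ) :
    (f, m) = (∑ i, f i • ((Pi.single i (1:ℤ) : ZMod n → ℤ), (0:ℤ)))
      + m • ((0 : ZMod n → ℤ), (1:ℤ)) := by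
  ext : 1
  · rw [Prod.fst_add, Prod.fst_sum]
    simp only [Prod.smul_fst, Prod.smul_snd, smul_zero, add_zero]
    exact (sum_single_eq f).symm
  · rw [Prod.snd_add, Prod.snd_sum]
    simp

section reps

variable (ρM : Representation ℤ (DihedralGroup n) ((ZMod n → ℤ) × ℤ))
variable (ρB : Representation ℤ (DihedralGroup n) (ZMod n → ℤ))
variable (ρR : Representation ℤ (DihedralGroup n) (DihedralGroup n → ℤ))

lemma rhoM_r1
    (hMσ : ∀ i : ZMod n, ρM (r 1) (Pi.single i 1, 0) = (Pi.single (i + 1) 1, 0))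
    (hMσw : ρM (r 1) (0, 1) = (0, 1)) (f : ZMod n → ℤ) (m : ℤ) :
    ρM (r 1) (f, m) = ((fun k => f (k - 1)), m) := by
  rw [M_decomp f m, map_add, map_sum, map_smul]
  simp_rw [map_smul, hMσ, hMσw]
  ext : 1
  · rw [Prod.fst_add, Prod.fst_sum]
    simp only [Prod.smul_fst, Prod.smul_snd, smul_zero, add_zero]
    exact shift_single 1 f
  · rw [Prod.snd_add, Prod.snd_sum]
    simp

lemma rhoM_sr0
    (hMτ : ∀ i : ZMod n, ρM (sr 0) (Pi.single i 1, 0) = (-Pi.single (-i) 1, 0))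
    (hMτw : ρM (sr 0) (0, 1) = (-∑ i : ZMod n, Pi.single i 1, 1)) (f : ZMod n → ℤ) (m : ℤ) :
    ρM (sr 0) (f, m) = ((fun k => -f (-k) - m), m) := by
  rw [M_decomp f m, map_add, map_sum, map_smul]
  simp_rw [map_smul, hMτ, hMτw]
  ext : 1
  · rw [Prod.fst_add, Prod.fst_sum]
    simp only [Prod.smul_fst, Prod.smul_snd, smul_zero, add_zero, smul_neg]
    have h1 : ∑ i, -(f i • (Pi.single (-i) (1:ℤ) : ZMod n → ℤ))
        = -(fun k => f (-k)) := by rw [Finset.sum_neg_distrib, neg_single]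
    rw [h1]
    have h2 : (∑ i : ZMod n, (Pi.single i (1:ℤ) : ZMod n → ℤ)) = fun _ => 1 := by
      rw [← sum_single_eq (fun _ => (1:ℤ))]
      simp [smul_single]
    rw [h2]
    funext k
    simp only [Pi.add_apply, Pi.neg_apply, Pi.smul_apply, smul_eq_mul, mul_one]
    ring
  · rw [Prod.snd_add, Prod.snd_sum]
    simp

lemma rhoB_r1
    (hBσ : ∀ i : ZMod n, ρB (r 1) (Pi.single i 1) = Pi.single (i + 1) 1) (h : ZMod n → ℤ) :
    ρB (r 1) h = fun k => h (k - 1) := by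
  conv_lhs => rw [← sum_single_eq h]
  rw [map_sum]
  simp_rw [map_smul, hBσ]
  exact shift_single 1 h

lemma rhoB_sr0
    (hBτ : ∀ i : ZMod n, ρB (sr 0) (Pi.single i 1) = Pi.single (-i) 1) (h : ZMod n → ℤ) :
    ρB (sr 0) h = fun k => h (-k) := by
  conv_lhs => rw [← sum_single_eq h]
  rw [map_sum]
  simp_rw [map_smul, hBτ]
  exact neg_single h

lemma rhoR_apply
    (hR : ∀ (g h : DihedralGroup n), ρR g (Pi.single h 1) = Pi.single (g * h) 1)
    (g : DihedralGroup n) (F : DihedralGroup n → ℤ) :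
    ρR g F = fun x => F (g⁻¹ * x) := by
  conv_lhs => rw [← sum_single_eq F]
  rw [map_sum]
  simp_rw [map_smul, hR]
  rw [← sum_single_eq (fun x => F (g⁻¹ * x))]
  exact Fintype.sum_equiv (Equiv.mulLeft g) _ _ (fun y => by simp)

end reps


section equivdef

variable (n : ℕ) [NeZero n]

/-- Forward map. -/
def fwd (x : ((ZMod n → ℤ) × ℤ) × (ZMod n → ℤ)) : (DihedralGroup n → ℤ) × ℤ :=
  (fun g => match g with
    | .r k => x.1.1 k + x.2 k + x.2 (k - 1)
    | .sr k => -x.1.1 (-k) + x.2 (-k) + x.2 (1 - k) - x.1.2,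
   (∑ j, x.2 j) + gam n * x.1.2)

/-- `R` auxiliary function for the inverse. -/
def Rf (y : (DihedralGroup n → ℤ) × ℤ) (j : ZMod n) : ℤ :=
  y.1 (.r j) + y.1 (.sr (-j))

/-- `h` part of the inverse. -/
def bwdh (y : (DihedralGroup n → ℤ) × ℤ) (k : ZMod n) : ℤ :=
  (∑ d, ccz n d * Rf n y (k - d)) + eps n * y.2

/-- Inverse map. -/
def bwd (y : (DihedralGroup n → ℤ) × ℤ) : ((ZMod n → ℤ) × ℤ) × (ZMod n → ℤ) :=
  ((fun k => y.1 (.r k) - bwdh n y k - bwdh n y (k - 1),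
    eps n * (4 * y.2 - ∑ j, Rf n y j)),
   bwdh n y)

lemma fwd_r (x : ((ZMod n → ℤ) × ℤ) × (ZMod n → ℤ)) (k : ZMod n) :
    (fwd n x).1 (.r k) = x.1.1 k + x.2 k + x.2 (k - 1) := rfl

lemma fwd_sr (x : ((ZMod n → ℤ) × ℤ) × (ZMod n → ℤ)) (k : ZMod n) :
    (fwd n x).1 (.sr k) = -x.1.1 (-k) + x.2 (-k) + x.2 (1 - k) - x.1.2 := rfl

lemma fwd_snd (x : ((ZMod n → ℤ) × ℤ) × (ZMod n → ℤ)) :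
    (fwd n x).2 = (∑ j, x.2 j) + gam n * x.1.2 := rfl

lemma fwd_add (x y : ((ZMod n → ℤ) × ℤ) × (ZMod n → ℤ)) :
    fwd n (x + y) = fwd n x + fwd n y := by
  ext g
  · cases g with
    | r k => simp [fwd_r]; ring
    | sr k => simp [fwd_sr]; ring
  · simp [fwd_snd, Finset.sum_add_distrib]; ring

lemma fwd_smul (c : ℤ) (x : ((ZMod n → ℤ) × ℤ) × (ZMod n → ℤ)) :
    fwd n (c • x) = c • fwd n x := by
  ext g
  · cases g with
    | r k => simp [fwd_r]; ring
    | sr k => simp [fwd_sr]; ring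
  · simp only [fwd_snd, Prod.smul_fst, Prod.smul_snd, Pi.smul_apply, smul_eq_mul]
    rw [← Finset.mul_sum]
    ring

end equivdef

section inverse

variable (n : ℕ) [NeZero n]

lemma convKey (hn : 3 ≤ n) (hodd : Odd n) (u : ZMod n → ℤ) (j : ZMod n) :
    ∑ d, ccz n d * (2 * u (j - d) + u (j - d - 1) + u (j - d + 1))
      = u j - eps n * ∑ i, u i := by
  have h1 : ∑ d, ccz n d * u (j - d - 1) = ∑ d, ccz n (d - 1) * u (j - d) := by
    refine Fintype.sum_equiv (Equiv.addRight (1 : ZMod n)) _ _ (fun d => ?_)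
    simp only [Equiv.coe_addRight, add_sub_cancel_right]
    rw [show j - (d + 1) = j - d - 1 by ring]
  have h2 : ∑ d, ccz n d * u (j - d + 1) = ∑ d, ccz n (d + 1) * u (j - d) := by
    refine Fintype.sum_equiv (Equiv.subRight (1 : ZMod n)) _ _ (fun d => ?_)
    simp only [Equiv.subRight_apply, sub_add_cancel]
    rw [show j - (d - 1) = j - d + 1 by ring]
  have step1 : ∑ d, ccz n d * (2 * u (j - d) + u (j - d - 1) + u (j - d + 1))
      = ∑ d, (2 * ccz n d + ccz n (d - 1) + ccz n (d + 1)) * u (j - d) := by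
    have expand1 : ∀ d : ZMod n, d ∈ Finset.univ →
        ccz n d * (2 * u (j - d) + u (j - d - 1) + u (j - d + 1))
        = 2 * (ccz n d * u (j - d)) + ccz n d * u (j - d - 1) + ccz n d * u (j - d + 1) :=
      fun d _ => by ring
    have expand2 : ∀ d : ZMod n, d ∈ Finset.univ →
        (2 * ccz n d + ccz n (d - 1) + ccz n (d + 1)) * u (j - d)
        = 2 * (ccz n d * u (j - d)) + ccz n (d - 1) * u (j - d) + ccz n (d + 1) * u (j - d) :=
      fun d _ => by ring
    rw [Finset.sum_congr rfl expand1, Finset.sum_add_distrib, Finset.sum_add_distrib, h1, h2,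
      ← Finset.mul_sum, Finset.sum_congr rfl expand2, Finset.sum_add_distrib,
      Finset.sum_add_distrib, ← Finset.mul_sum]
  have step2 : ∑ d, (2 * ccz n d + ccz n (d - 1) + ccz n (d + 1)) * u (j - d)
      = ∑ d, ((if d = (0:ZMod n) then 1 else 0) - eps n) * u (j - d) := by
    refine Finset.sum_congr rfl (fun d _ => ?_)
    have := recA n hn hodd d
    have h3 : 2 * ccz n d + ccz n (d - 1) + ccz n (d + 1)
        = (if d = (0:ZMod n) then 1 else 0) - eps n := by omega
    rw [h3]
  have step3 : ∑ d, ((if d = (0:ZMod n) then 1 else 0) - eps n) * u (j - d)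
      = (∑ d, (if d = (0:ZMod n) then u (j - d) else 0)) - eps n * ∑ d, u (j - d) := by
    rw [Finset.mul_sum, ← Finset.sum_sub_distrib]
    refine Finset.sum_congr rfl (fun d _ => ?_)
    by_cases hd : d = (0:ZMod n) <;> simp [hd] <;> ring
  rw [step1, step2, step3, Finset.sum_ite_eq' Finset.univ (0:ZMod n) (fun d => u (j - d)),
    sum_sub_left u j]
  simp

lemma left_inv_aux (hn : 3 ≤ n) (hodd : Odd n)
    (x : ((ZMod n → ℤ) × ℤ) × (ZMod n → ℤ)) : bwd n (fwd n x) = x := by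
  obtain ⟨⟨f, m⟩, h⟩ := x
  set y := fwd n ((f, m), h) with hy
  have hRf : ∀ j, Rf n y j = 2 * h j + h (j - 1) + h (j + 1) - m := by
    intro j
    show y.1 (.r j) + y.1 (.sr (-j)) = _
    rw [hy, fwd_r, fwd_sr, neg_neg, sub_neg_eq_add]
    show f j + h j + h (j - 1) + (-f j + h j + h (1 + j) - m) = _
    rw [show (1 : ZMod n) + j = j + 1 from add_comm 1 j]
    ring
  have hSR : ∑ j, Rf n y j = 4 * (∑ j, h j) - n * m := by
    rw [Finset.sum_congr rfl (fun j _ => hRf j)]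
    have expand1 : ∀ j : ZMod n, j ∈ Finset.univ →
        2 * h j + h (j - 1) + h (j + 1) - m
        = 2 * h j + h (j - 1) + h (j + 1) - m := fun j _ => rfl
    rw [Finset.sum_sub_distrib, Finset.sum_add_distrib, Finset.sum_add_distrib,
      ← Finset.mul_sum, sum_shift' h 1, sum_shift h 1, Finset.sum_const,
      Finset.card_univ, ZMod.card, nsmul_eq_mul]
    ring
  have hy2 : y.2 = (∑ j, h j) + gam n * m := rfl
  have g4 := gam4 n hodd
  have es := eps_sq n
  have hm : eps n * (4 * y.2 - ∑ j, Rf n y j) = m := by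
    rw [hy2, hSR]
    linear_combination (m * eps n) * g4 + m * es
  have hh : bwdh n y = h := by
    funext k
    show (∑ d, ccz n d * Rf n y (k - d)) + eps n * y.2 = h k
    have e1 : ∀ d : ZMod n, d ∈ Finset.univ → ccz n d * Rf n y (k - d)
        = ccz n d * (2 * h (k - d) + h (k - d - 1) + h (k - d + 1)) - ccz n d * m := by
      intro d _
      rw [hRf]
      ring
    rw [Finset.sum_congr rfl e1, Finset.sum_sub_distrib, convKey n hn hodd h k,
      ← Finset.sum_mul, sumB n hodd, hy2]
    ring
  show ((fun k => y.1 (.r k) - bwdh n y k - bwdh n y (k - 1),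
      eps n * (4 * y.2 - ∑ j, Rf n y j)), bwdh n y) = ((f, m), h)
  rw [hh, hm]
  have hfst : (fun k => y.1 (.r k) - h k - h (k - 1)) = f := by
    funext k
    rw [hy, fwd_r]
    show f k + h k + h (k - 1) - h k - h (k - 1) = f k
    ring
  rw [hfst]

lemma right_inv_aux (hn : 3 ≤ n) (hodd : Odd n)
    (y : (DihedralGroup n → ℤ) × ℤ) : fwd n (bwd n y) = y := by
  set h' := bwdh n y with hh'
  set m' := eps n * (4 * y.2 - ∑ j, Rf n y j) with hm'
  have g4 := gam4 n hodd
  have es := eps_sq n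
  have hb : ∀ k' : ZMod n, h' k' = (∑ d, ccz n d * Rf n y (k' - d)) + eps n * y.2 :=
    fun _ => rfl
  have hT : ∀ j, 2 * h' j + h' (j - 1) + h' (j + 1) = Rf n y j + m' := by
    intro j
    rw [hb j, hb (j - 1), hb (j + 1)]
    have c1 : ∑ d, ccz n d * Rf n y (j - 1 - d) = ∑ d, ccz n d * Rf n y (j - d - 1) :=
      Finset.sum_congr rfl (fun d _ => by rw [show j - 1 - d = j - d - 1 by ring])
    have c2 : ∑ d, ccz n d * Rf n y (j + 1 - d) = ∑ d, ccz n d * Rf n y (j - d + 1) :=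
      Finset.sum_congr rfl (fun d _ => by rw [show j + 1 - d = j - d + 1 by ring])
    rw [c1, c2]
    have hsplit : ∑ d, ccz n d * (2 * Rf n y (j - d) + Rf n y (j - d - 1) + Rf n y (j - d + 1))
        = 2 * (∑ d, ccz n d * Rf n y (j - d)) + (∑ d, ccz n d * Rf n y (j - d - 1))
          + (∑ d, ccz n d * Rf n y (j - d + 1)) := by
      have expand1 : ∀ d : ZMod n, d ∈ Finset.univ →
          ccz n d * (2 * Rf n y (j - d) + Rf n y (j - d - 1) + Rf n y (j - d + 1))
          = 2 * (ccz n d * Rf n y (j - d)) + ccz n d * Rf n y (j - d - 1)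
            + ccz n d * Rf n y (j - d + 1) := fun d _ => by ring
      rw [Finset.sum_congr rfl expand1, Finset.sum_add_distrib, Finset.sum_add_distrib,
        ← Finset.mul_sum]
    have hconv := convKey n hn hodd (Rf n y) j
    rw [hsplit] at hconv
    rw [hm']
    linarith [hconv]
  have comp2 : (∑ k, h' k) + gam n * m' = y.2 := by
    have hSh : ∑ k, h' k = (eps n * gam n) * (∑ j, Rf n y j) + n * (eps n * y.2) := by
      have : ∑ k, h' k = ∑ k, ((∑ d, ccz n d * Rf n y (k - d)) + eps n * y.2) :=
        Finset.sum_congr rfl (fun k _ => hb k)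
      rw [this, Finset.sum_add_distrib, Finset.sum_const, Finset.card_univ, ZMod.card,
        nsmul_eq_mul]
      congr 1
      rw [Finset.sum_comm]
      have hinner : ∀ d : ZMod n, d ∈ Finset.univ →
          ∑ k, ccz n d * Rf n y (k - d) = ccz n d * ∑ j, Rf n y j := by
        intro d _
        rw [← Finset.mul_sum, sum_shift' (Rf n y) d]
      rw [Finset.sum_congr rfl hinner, ← Finset.sum_mul, sumB n hodd]
    rw [hSh, hm']
    linear_combination (y.2 * eps n) * g4 + y.2 * es
  have comp1 : (fwd n (bwd n y)).1 = y.1 := by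
    funext g
    cases g with
    | r k =>
      rw [fwd_r]
      show (y.1 (.r k) - h' k - h' (k - 1)) + h' k + h' (k - 1) = y.1 (.r k)
      ring
    | sr k =>
      rw [fwd_sr]
      show -(y.1 (.r (-k)) - h' (-k) - h' (-k - 1)) + h' (-k) + h' (1 - k) - m' = y.1 (.sr k)
      rw [show (1 : ZMod n) - k = -k + 1 by ring]
      have hTk := hT (-k)
      have hRfk : Rf n y (-k) = y.1 (.r (-k)) + y.1 (.sr k) := by
        show y.1 (.r (-k)) + y.1 (.sr (- -k)) = _
        rw [neg_neg]
      linarith [hTk, hRfk]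
  have comp2' : (fwd n (bwd n y)).2 = y.2 := by
    rw [fwd_snd]
    exact comp2
  exact Prod.ext comp1 comp2'

/-- The `ℤ`-linear equivalence underlying the theorem. -/
def hkEquiv (hn : 3 ≤ n) (hodd : Odd n) :
    (((ZMod n → ℤ) × ℤ) × (ZMod n → ℤ)) ≃ₗ[ℤ] (DihedralGroup n → ℤ) × ℤ where
  toFun := fwd n
  map_add' := fwd_add n
  map_smul' := fwd_smul n
  invFun := bwd n
  left_inv := left_inv_aux n hn hodd
  right_inv := right_inv_aux n hn hodd

end inverse

end HKY35

/-- **Hoshi–Kang–Yamasaki, Theorem 3.5.**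
Let `n ≥ 3` be an odd integer and `G = Dₙ`, with `σ = r 1` and `τ = sr 0`.
`ρM` is the `G`-lattice `M̃₋` (free on `w₀,…,w_{n-1}, w'` with `σ·wᵢ = w_{i+1}`,
`σ·w' = w'`, `τ·wᵢ = -w_{n-i}`, `τ·w' = w' - Σ wᵢ`), `ρB` is `ℤ[G/⟨τ⟩]` and `ρR` is the
regular lattice `ℤ[G]`.  Then `M̃₋ ⊕ ℤ[G/⟨τ⟩] ≅ ℤ[G] ⊕ ℤ` as `ℤ[G]`-modules. -/
theorem stmt1 (n : ℕ) (hn : 3 ≤ n) (hodd : Odd n) [NeZero n]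
    (ρM : Representation ℤ (DihedralGroup n) ((ZMod n → ℤ) × ℤ))
    (hMσ : ∀ i : ZMod n, ρM (r 1) (Pi.single i 1, 0) = (Pi.single (i + 1) 1, 0))
    (hMσw : ρM (r 1) (0, 1) = (0, 1))
    (hMτ : ∀ i : ZMod n, ρM (sr 0) (Pi.single i 1, 0) = (-Pi.single (-i) 1, 0))
    (hMτw : ρM (sr 0) (0, 1) = (-∑ i : ZMod n, Pi.single i 1, 1))
    (ρB : Representation ℤ (DihedralGroup n) (ZMod n → ℤ))
    (hBσ : ∀ i : ZMod n, ρB (r 1) (Pi.single i 1) = Pi.single (i + 1) 1)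
    (hBτ : ∀ i : ZMod n, ρB (sr 0) (Pi.single i 1) = Pi.single (-i) 1)
    (ρR : Representation ℤ (DihedralGroup n) (DihedralGroup n → ℤ))
    (hR : ∀ (g h : DihedralGroup n), ρR g (Pi.single h 1) = Pi.single (g * h) 1) :
    ∃ e : (((ZMod n → ℤ) × ℤ) × (ZMod n → ℤ)) ≃ₗ[ℤ] (DihedralGroup n → ℤ) × ℤ,
      ∀ (g : DihedralGroup n) (x : ((ZMod n → ℤ) × ℤ) × (ZMod n → ℤ)),
        e (ρM g x.1, ρB g x.2) = (ρR g (e x).1, (e x).2) := by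
  refine ⟨HKY35.hkEquiv n hn hodd, ?_⟩
  have he : ∀ z, HKY35.hkEquiv n hn hodd z = HKY35.fwd n z := fun _ => rfl
  simp only [he]
  set P : DihedralGroup n → Prop := fun g => ∀ x : ((ZMod n → ℤ) × ℤ) × (ZMod n → ℤ),
    HKY35.fwd n (ρM g x.1, ρB g x.2) = (ρR g (HKY35.fwd n x).1, (HKY35.fwd n x).2) with hPdef
  suffices hAll : ∀ g, P g by exact hAll
  have Pone : P 1 := by
    intro x
    simp only [hPdef, map_one, Module.End.one_apply]
  have Pmul : ∀ g h, P g → P h → P (g * h) := by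
    intro g h Pg Ph x
    have h1 : ρM (g * h) x.1 = ρM g (ρM h x.1) := by rw [map_mul]; rfl
    have h2 : ρB (g * h) x.2 = ρB g (ρB h x.2) := by rw [map_mul]; rfl
    have h3 : ρR (g * h) (HKY35.fwd n x).1 = ρR g (ρR h (HKY35.fwd n x).1) := by
      rw [map_mul]; rfl
    rw [h1, h2, h3]
    have step := Pg (ρM h x.1, ρB h x.2)
    simp only at step
    rw [step, Ph x]
  -- the σ generator
  have Pr1 : P (r 1) := by
    intro x
    obtain ⟨⟨f, m⟩, h⟩ := x
    simp only
    rw [HKY35.rhoM_r1 ρM hMσ hMσw f m, HKY35.rhoB_r1 ρB hBσ h,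
      HKY35.rhoR_apply ρR hR (r 1)]
    have hinv : (r (1 : ZMod n))⁻¹ = r (-1) := by
      apply inv_eq_of_mul_eq_one_right
      rw [r_mul_r, add_neg_cancel, ← one_def]
    refine Prod.ext ?_ ?_
    · funext g
      cases g with
      | r k =>
        show (HKY35.fwd n ((fun k => f (k-1), m), fun k => h (k-1))).1 (DihedralGroup.r k)
          = (HKY35.fwd n ((f, m), h)).1 ((r 1)⁻¹ * r k)
        rw [hinv, r_mul_r, HKY35.fwd_r, HKY35.fwd_r,
          show (-1 : ZMod n) + k = k - 1 by ring]
      | sr k =>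
        show (HKY35.fwd n ((fun k => f (k-1), m), fun k => h (k-1))).1 (DihedralGroup.sr k)
          = (HKY35.fwd n ((f, m), h)).1 ((r 1)⁻¹ * sr k)
        rw [hinv, r_mul_sr, HKY35.fwd_sr, HKY35.fwd_sr, sub_neg_eq_add]
        show -f (-k - 1) + h (-k - 1) + h (1 - k - 1) - m
          = -f (-(k+1)) + h (-(k+1)) + h (1 - (k+1)) - m
        rw [show -(k+1) = -k - 1 by ring, show (1:ZMod n) - (k+1) = 1 - k - 1 by ring]
    · show (∑ j, h (j - 1)) + HKY35.gam n * m = (∑ j, h j) + HKY35.gam n * m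
      rw [HKY35.sum_shift' h 1]
  -- the τ generator
  have Psr0 : P (sr 0) := by
    intro x
    obtain ⟨⟨f, m⟩, h⟩ := x
    simp only
    rw [HKY35.rhoM_sr0 ρM hMτ hMτw f m, HKY35.rhoB_sr0 ρB hBτ h,
      HKY35.rhoR_apply ρR hR (sr 0)]
    have hinv : (sr (0 : ZMod n))⁻¹ = sr 0 := by
      apply inv_eq_of_mul_eq_one_right
      rw [sr_mul_sr, sub_zero, ← one_def]
    refine Prod.ext ?_ ?_
    · funext g
      cases g with
      | r k =>
        show (HKY35.fwd n ((fun k => -f (-k) - m, m), fun k => h (-k))).1 (DihedralGroup.r k)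
          = (HKY35.fwd n ((f, m), h)).1 ((sr 0)⁻¹ * r k)
        rw [hinv, sr_mul_r, zero_add, HKY35.fwd_r, HKY35.fwd_sr]
        show -f (-k) - m + h (-k) + h (-(k-1)) = -f (-k) + h (-k) + h (1 - k) - m
        rw [show -(k-1) = 1 - k by ring]
        ring
      | sr k =>
        show (HKY35.fwd n ((fun k => -f (-k) - m, m), fun k => h (-k))).1 (DihedralGroup.sr k)
          = (HKY35.fwd n ((f, m), h)).1 ((sr 0)⁻¹ * sr k)
        rw [hinv, sr_mul_sr, sub_zero, HKY35.fwd_sr, HKY35.fwd_r]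
        show -(-f (- -k) - m) + h (- -k) + h (-(1 - k)) - m = f k + h k + h (k - 1)
        rw [neg_neg, show -((1:ZMod n) - k) = k - 1 by ring]
        ring
    · show (∑ j, h (-j)) + HKY35.gam n * m = (∑ j, h j) + HKY35.gam n * m
      rw [HKY35.sum_neg h]
  -- powers of r 1
  have Prk : ∀ k : ℕ, P (r (k : ZMod n)) := by
    intro k
    induction k with
    | zero =>
      have h0 : (r ((0:ℕ) : ZMod n) : DihedralGroup n) = 1 := by
        rw [Nat.cast_zero, ← one_def]
      rw [h0]
      exact Pone
    | succ k ih =>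
      have hs : (r (((k+1:ℕ)) : ZMod n) : DihedralGroup n) = r 1 * r (k : ZMod n) := by
        rw [r_mul_r]
        congr 1
        push_cast
        ring
      rw [hs]
      exact Pmul _ _ Pr1 ih
  have Pr : ∀ i : ZMod n, P (r i) := by
    intro i
    have hcast : ((i.val : ℕ) : ZMod n) = i := by simp [ZMod.natCast_val, ZMod.cast_id]
    have := Prk i.val
    rwa [hcast] at this
  intro g
  cases g with
  | r i => exact Pr i
  | sr i =>
    have hs : (sr i : DihedralGroup n) = sr 0 * r i := by rw [sr_mul_r, zero_add]
    rw [hs]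
    exact Pmul _ _ Psr0 (Pr i)
end

section
/- Let n ≥ 3 be an odd integer and G = D_n the dihedral group of order 2n. Then there is an isomorphism of ℤ[G]-modules M̃₊ ⊕ M̃₋ ≅ ℤ[G] ⊕ ℤ[G/⟨σ⟩]. -/
open DihedralGroup Finset

namespace HKY37

variable {n : ℕ}

theorem sumRange [NeZero n] (G : ZMod n → ℤ) : ∑ t ∈ range n, G t = ∑ u : ZMod n, G u := by
  refine Finset.sum_nbij' (fun t => (t : ZMod n)) (fun u => u.val) ?_ ?_ ?_ ?_ ?_ <;>
    simp +contextual [ZMod.val_cast_of_lt, ZMod.val_lt, ZMod.natCast_val, ZMod.cast_id,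
      Nat.mod_eq_of_lt]

theorem doubleSum (F : ℕ → ℤ) (m : ℕ) :
    ∑ t ∈ range (2*m), F t = ∑ s ∈ range m, (F (2*s) + F (2*s+1)) := by
  induction m with
  | zero => simp
  | succ k ih => rw [Nat.mul_succ, Finset.sum_range_succ, Finset.sum_range_succ,
      Finset.sum_range_succ, ih]; ring

theorem key [NeZero n] {m : ℕ} (hm : n = 2*m+1) (ψ : ZMod n → ℤ) (j : ZMod n) :
    (∑ s ∈ range m, ψ (j - 2 - 4*(s:ZMod n))) + (∑ s ∈ range m, ψ (j - 2 - 4*(s:ZMod n) - 2))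
      = (∑ k : ZMod n, ψ k) - ψ j := by
  have hn0 : ((2*m+1 : ℕ) : ZMod n) = 0 := by rw [← hm]; exact ZMod.natCast_self n
  push_cast at hn0
  have h1 : (∑ s ∈ range m, ψ (j - 2 - 4*(s:ZMod n))) + (∑ s ∈ range m, ψ (j - 2 - 4*(s:ZMod n) - 2))
      = ∑ t ∈ range (2*m), ψ (j - 2 - 2*(t:ZMod n)) := by
    rw [doubleSum (fun t => ψ (j - 2 - 2*((t:ℕ):ZMod n))) m, ← Finset.sum_add_distrib]
    refine Finset.sum_congr rfl fun s _ => ?_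
    congr 2 <;> push_cast <;> ring
  rw [h1]
  have h2 : ∑ t ∈ range n, ψ (j - 2 - 2*(t:ZMod n)) = ∑ k : ZMod n, ψ k := by
    rw [sumRange (fun u => ψ (j - 2 - 2*u))]
    refine Fintype.sum_bijective (fun u : ZMod n => j - 2 - 2*u) ?_ _ _ (fun u => rfl)
    refine Finite.injective_iff_bijective.mp fun u v huv => ?_
    have h3 : 2*u = 2*v := by linear_combination -huv
    linear_combination ((m:ZMod n)+1)*h3 + (v-u)*hn0
  have h4 := Finset.sum_range_succ (fun t => ψ (j - 2 - 2*((t:ℕ):ZMod n))) (2*m)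
  rw [← hm] at h4
  have h5 : j - 2 - 2*((2*m : ℕ):ZMod n) = j := by push_cast; linear_combination -2*hn0
  rw [h5] at h4
  omega

/-- the sum over the dihedral group splits -/
def GEquiv (n : ℕ) : (ZMod n) ⊕ (ZMod n) ≃ DihedralGroup n where
  toFun := Sum.elim r sr
  invFun g := match g with | r i => .inl i | sr i => .inr i
  left_inv := by rintro (i|i) <;> rfl
  right_inv := by rintro (i|i) <;> rfl

theorem sumG [NeZero n] (h : DihedralGroup n → ℤ) :
    ∑ g : DihedralGroup n, h g = ∑ i : ZMod n, h (r i) + ∑ i : ZMod n, h (sr i) := by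
  rw [← Equiv.sum_comp (GEquiv n) h, Fintype.sum_sum_type]
  rfl

section maps

/-! the forward map -/

def eH (x : ((ZMod n → ℤ) × ℤ) × ((ZMod n → ℤ) × ℤ)) : DihedralGroup n → ℤ
  | .r i => x.1.1 i - x.1.2 + x.2.1 (i + 1)
  | .sr i => x.1.1 (-i) + 2 * x.1.2 - x.2.1 (-i - 1) - x.2.2

def eP [NeZero n] (m : ℕ) (x : ((ZMod n → ℤ) × ℤ) × ((ZMod n → ℤ) × ℤ)) : ℤ :=
  -(∑ i : ZMod n, x.1.1 i) - (m:ℤ) * x.1.2 + (m:ℤ) * x.2.2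

def eT [NeZero n] (m : ℕ) (x : ((ZMod n → ℤ) × ℤ) × ((ZMod n → ℤ) × ℤ)) :
    (DihedralGroup n → ℤ) × (ℤ × ℤ) :=
  (eH x, eP m x, eP m x - x.1.2)

@[simp] theorem eH_r (x : ((ZMod n → ℤ) × ℤ) × ((ZMod n → ℤ) × ℤ)) (i : ZMod n) :
    eH x (r i) = x.1.1 i - x.1.2 + x.2.1 (i + 1) := rfl

@[simp] theorem eH_sr (x : ((ZMod n → ℤ) × ℤ) × ((ZMod n → ℤ) × ℤ)) (i : ZMod n) :
    eH x (sr i) = x.1.1 (-i) + 2 * x.1.2 - x.2.1 (-i - 1) - x.2.2 := rfl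

/-! the inverse map -/

def iW (h : DihedralGroup n → ℤ) (k : ZMod n) : ℤ := h (.sr (-k)) + h (.r (k - 2))

def iF (m : ℕ) (y : (DihedralGroup n → ℤ) × (ℤ × ℤ)) (i : ZMod n) : ℤ :=
  -y.2.1 - ∑ s ∈ Finset.range m, iW y.1 (i - 2 - 4 * (s : ZMod n))

def iT [NeZero n] (m : ℕ) (y : (DihedralGroup n → ℤ) × (ℤ × ℤ)) :
    ((ZMod n → ℤ) × ℤ) × ((ZMod n → ℤ) × ℤ) :=
  ((iF m y, y.2.1 - y.2.2),
   (fun j => y.1 (r (j-1)) - iF m y (j-1) + (y.2.1 - y.2.2),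
    -y.2.1 - y.2.2 - ∑ g : DihedralGroup n, y.1 g))

end maps

section invproofs

variable [NeZero n] {m : ℕ}

theorem iF_eT (hm : n = 2*m+1) (x : ((ZMod n → ℤ) × ℤ) × ((ZMod n → ℤ) × ℤ)) (i : ZMod n) :
    iF m (eT m x) i = x.1.1 i := by
  obtain ⟨⟨f, c⟩, g, d⟩ := x
  have hW : ∀ k : ZMod n, iW (eH ((f,c),(g,d))) k = f k + f (k - 2) + (c - d) := by
    intro k
    simp only [iW, eH_sr, eH_r, neg_neg]
    have h2 : k - 2 + 1 = k - 1 := by ring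
    rw [h2]; ring
  have hsplit : ∑ s ∈ range m, iW (eH ((f,c),(g,d))) (i - 2 - 4 * (s : ZMod n))
      = (∑ s ∈ range m, f (i - 2 - 4*(s:ZMod n))) + (∑ s ∈ range m, f (i - 2 - 4*(s:ZMod n) - 2))
        + (m:ℤ) * (c - d) := by
    simp only [hW]
    rw [Finset.sum_add_distrib, Finset.sum_add_distrib, Finset.sum_const]
    simp [add_assoc, mul_comm]
  simp only [iF, eT, hsplit, key hm f i, eP]
  ring

theorem sum_bij_arg {α : Type*} [Fintype α] (f : α → ℤ) (u : α → α)
    (hu : Function.Injective u) : ∑ i, f (u i) = ∑ i, f i :=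
  Fintype.sum_bijective u (Finite.injective_iff_bijective.mp hu) _ _ fun _ => rfl

theorem sum_const_z [NeZero n] (c : ℤ) : ∑ _i : ZMod n, c = (n:ℤ)*c := by
  rw [Finset.sum_const, Finset.card_univ, ZMod.card, nsmul_eq_mul]

theorem left_inv_aux (hm : n = 2*m+1) (x : ((ZMod n → ℤ) × ℤ) × ((ZMod n → ℤ) × ℤ)) :
    iT m (eT m x) = x := by
  obtain ⟨⟨f, c⟩, g, d⟩ := x
  have hn : (n : ℤ) = 2*(m:ℤ)+1 := by exact_mod_cast congrArg (Nat.cast : ℕ → ℤ) hm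
  have hr' : ∑ i : ZMod n, eH ((f,c),(g,d)) (r i)
      = (∑ i : ZMod n, f i) - (n:ℤ)*c + (∑ i : ZMod n, g i) := by
    simp only [eH_r]
    rw [Finset.sum_add_distrib, Finset.sum_sub_distrib]
    rw [sum_bij_arg g (fun i => i + 1) (fun u v h => by linear_combination h), sum_const_z c]
  have hsr' : ∑ i : ZMod n, eH ((f,c),(g,d)) (sr i)
      = (∑ i : ZMod n, f i) + 2*(n:ℤ)*c - (∑ i : ZMod n, g i) - (n:ℤ)*d := by
    simp only [eH_sr]
    rw [Finset.sum_sub_distrib, Finset.sum_sub_distrib, Finset.sum_add_distrib]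
    rw [sum_bij_arg f (fun i => -i) (fun u v h => by linear_combination -h)]
    rw [sum_bij_arg g (fun i => -i - 1) (fun u v h => by linear_combination -h),
      sum_const_z (2*c), sum_const_z d]
    ring
  have hSG : ∑ gg : DihedralGroup n, eH ((f,c),(g,d)) gg
      = 2*(∑ i : ZMod n, f i) + (n:ℤ)*c - (n:ℤ)*d := by
    rw [sumG, hr', hsr']; ring
  unfold iT
  refine Prod.ext (Prod.ext ?_ ?_) (Prod.ext ?_ ?_)
  · funext i; exact iF_eT hm ((f,c),(g,d)) i
  · show eP m ((f,c),(g,d)) - (eP m ((f,c),(g,d)) - c) = c; ring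
  · funext j
    show eH ((f,c),(g,d)) (r (j-1)) - iF m (eT m ((f,c),(g,d))) (j-1)
        + (eP m ((f,c),(g,d)) - (eP m ((f,c),(g,d)) - c)) = g j
    rw [iF_eT hm ((f,c),(g,d)) (j-1), eH_r]
    show f (j-1) - c + g (j - 1 + 1) - f (j-1) + _ = g j
    rw [show j - 1 + 1 = j by ring]; ring
  · show -eP m ((f,c),(g,d)) - (eP m ((f,c),(g,d)) - c)
        - (∑ gg : DihedralGroup n, eH ((f,c),(g,d)) gg) = d
    rw [hSG]
    unfold eP
    simp only
    rw [hn]; ring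

theorem sum_iW [NeZero n] (h : DihedralGroup n → ℤ) :
    ∑ k : ZMod n, iW h k = ∑ gg : DihedralGroup n, h gg := by
  unfold iW
  rw [Finset.sum_add_distrib, sumG]
  rw [sum_bij_arg (fun k => h (sr k)) (fun k => -k) (fun u v hh => by linear_combination -hh)]
  rw [sum_bij_arg (fun k => h (r k)) (fun k => k - 2) (fun u v hh => by linear_combination hh)]
  ring

theorem iF_pair (hm : n = 2*m+1) (y : (DihedralGroup n → ℤ) × (ℤ × ℤ)) (j : ZMod n) :
    iF m y j + iF m y (j - 2)
      = y.1 (sr (-j)) + y.1 (r (j - 2)) - 2*y.2.1 - ∑ gg : DihedralGroup n, y.1 gg := by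
  unfold iF
  have h2 : ∑ s ∈ range m, iW y.1 (j - 2 - 2 - 4*(s:ZMod n))
      = ∑ s ∈ range m, iW y.1 (j - 2 - 4*(s:ZMod n) - 2) :=
    Finset.sum_congr rfl fun s _ => by congr 1; ring
  rw [h2]
  have h3 := key hm (iW y.1) j
  have h4 := sum_iW y.1
  have h5 : iW y.1 j = y.1 (sr (-j)) + y.1 (r (j-2)) := rfl
  linarith [h3]

theorem right_inv_aux (hm : n = 2*m+1) (y : (DihedralGroup n → ℤ) × (ℤ × ℤ)) :
    eT m (iT m y) = y := by
  obtain ⟨h, p, q⟩ := y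
  have hn : (n : ℤ) = 2*(m:ℤ)+1 := by exact_mod_cast congrArg (Nat.cast : ℕ → ℤ) hm
  have hsumf : ∑ i : ZMod n, iF m (h,(p,q)) i
      = -(n:ℤ)*p - (m:ℤ) * ∑ gg : DihedralGroup n, h gg := by
    unfold iF
    rw [Finset.sum_sub_distrib]
    rw [sum_const_z (-p)]
    rw [Finset.sum_comm]
    have hinner : ∀ s ∈ range m, ∑ i : ZMod n, iW h (i - 2 - 4*(s:ZMod n))
        = ∑ gg : DihedralGroup n, h gg := by
      intro s _
      rw [sum_bij_arg (iW h) (fun i => i - 2 - 4*(s:ZMod n))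
        (fun u v hh => by linear_combination hh), sum_iW]
    rw [Finset.sum_congr rfl hinner, Finset.sum_const, Finset.card_range]
    push_cast; ring
  refine Prod.ext ?_ (Prod.ext ?_ ?_)
  · funext gg
    cases gg with
    | r i =>
      show eH (iT m (h,(p,q))) (r i) = h (r i)
      rw [eH_r]
      show iF m (h,(p,q)) i - (p - q)
          + (h (r (i+1-1)) - iF m (h,(p,q)) (i+1-1) + (p - q)) = h (r i)
      rw [show i + 1 - 1 = i by ring]; ring
    | sr i =>
      show eH (iT m (h,(p,q))) (sr i) = h (sr i)
      rw [eH_sr]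
      show iF m (h,(p,q)) (-i) + 2*(p - q)
          - (h (r (-i-1-1)) - iF m (h,(p,q)) (-i-1-1) + (p - q))
          - (-p - q - ∑ gg : DihedralGroup n, h gg) = h (sr i)
      rw [show -i - 1 - 1 = -i - 2 by ring]
      have hp := iF_pair hm (h,(p,q)) (-i)
      simp only [neg_neg] at hp
      show iF m (h,(p,q)) (-i) + 2*(p - q) - (h (r (-i-2)) - iF m (h,(p,q)) (-i - 2) + (p - q))
          - (-p - q - ∑ gg : DihedralGroup n, h gg) = h (sr i)
      rw [show ((-i : ZMod n) - 2) = (-i) - 2 from rfl] at hp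
      linarith [hp]
  · show eP m (iT m (h,(p,q))) = p
    unfold eP
    show -(∑ i : ZMod n, iF m (h,(p,q)) i) - (m:ℤ)*(p - q)
        + (m:ℤ)*(-p - q - ∑ gg : DihedralGroup n, h gg) = p
    rw [hsumf, hn]; ring
  · show eP m (iT m (h,(p,q))) - (p - q) = q
    have : eP m (iT m (h,(p,q))) = p := by
      unfold eP
      show -(∑ i : ZMod n, iF m (h,(p,q)) i) - (m:ℤ)*(p - q)
          + (m:ℤ)*(-p - q - ∑ gg : DihedralGroup n, h gg) = p
      rw [hsumf, hn]; ring
    rw [this]; ring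

end invproofs


section reps

theorem sum_single_comp {α : Type*} [Fintype α] [DecidableEq α] (a : α → ℤ) (u v : α → α)
    (huv : ∀ j, u (v j) = j) (hvu : ∀ i, v (u i) = i) :
    ∑ i, a i • Pi.single (u i) (1:ℤ) = fun j => a (v j) := by
  funext j
  rw [Finset.sum_apply]
  have hterm : ∀ i, (a i • (Pi.single (u i) (1:ℤ) : α → ℤ)) j = if u i = j then a i else 0 := by
    intro i; by_cases hij : u i = j <;> simp [hij, Pi.single_apply]
  simp only [hterm]
  refine (Finset.sum_eq_single (v j) (fun b _ hb => ?_) (by simp)).trans (by simp [huv])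
  have hb' : u b ≠ j := fun hc => hb (by rw [← hvu b, hc])
  simp [hb']

theorem sum_single_one {α : Type*} [Fintype α] [DecidableEq α] :
    ∑ i : α, Pi.single i (1:ℤ) = fun _ => 1 := by
  funext j
  rw [Finset.sum_apply]
  simp [Pi.single_apply]

variable [NeZero n]

theorem decompM (f : ZMod n → ℤ) (c : ℤ) :
    ((f, c) : (ZMod n → ℤ) × ℤ)
      = (∑ i : ZMod n, f i • ((Pi.single i 1 : ZMod n → ℤ), (0:ℤ))) + c • ((0, 1) : (ZMod n → ℤ) × ℤ) := by
  refine Prod.ext ?_ ?_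
  · rw [Prod.fst_add, Prod.fst_sum]
    simp [← Pi.single_smul, Finset.univ_sum_single]
  · rw [Prod.snd_add, Prod.snd_sum]
    simp

theorem repM_apply (ρ : Representation ℤ (DihedralGroup n) ((ZMod n → ℤ) × ℤ))
    (g : DihedralGroup n) (f : ZMod n → ℤ) (c : ℤ) :
    ρ g (f, c) = ∑ i : ZMod n, f i • ρ g (Pi.single i 1, 0) + c • ρ g (0, 1) := by
  conv_lhs => rw [decompM f c]
  rw [map_add, map_sum]
  simp only [map_smul]

theorem decompR (h : DihedralGroup n → ℤ) :
    h = ∑ k : DihedralGroup n, h k • Pi.single k (1:ℤ) := by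
  simp [← Pi.single_smul, Finset.univ_sum_single]

theorem repR_apply (ρR : Representation ℤ (DihedralGroup n) (DihedralGroup n → ℤ))
    (hR : ∀ (g h : DihedralGroup n), ρR g (Pi.single h 1) = Pi.single (g * h) 1)
    (g : DihedralGroup n) (h : DihedralGroup n → ℤ) :
    ρR g h = fun k => h (g⁻¹ * k) := by
  conv_lhs => rw [decompR h]
  rw [map_sum]
  simp only [map_smul, hR]
  exact sum_single_comp h (fun k => g * k) (fun k => g⁻¹ * k)
    (fun j => by group) (fun i => by group)

theorem r_one_inv : (r 1 : DihedralGroup n)⁻¹ = r (-1) := by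
  refine inv_eq_of_mul_eq_one_right ?_
  rw [r_mul_r, add_neg_cancel]
  rfl

theorem sr_zero_inv : (sr 0 : DihedralGroup n)⁻¹ = sr 0 := by
  refine inv_eq_of_mul_eq_one_right ?_
  rw [sr_mul_sr, sub_zero]
  rfl


theorem Mp_r1 (ρ : Representation ℤ (DihedralGroup n) ((ZMod n → ℤ) × ℤ))
    (hσ : ∀ i : ZMod n, ρ (r 1) (Pi.single i 1, 0) = (Pi.single (i + 1) 1, 0))
    (hσw : ρ (r 1) (0, 1) = (0, 1)) (f : ZMod n → ℤ) (c : ℤ) :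
    ρ (r 1) (f, c) = ((fun j => f (j - 1)), c) := by
  rw [repM_apply ρ (r 1) f c, hσw]
  simp only [hσ]
  refine Prod.ext ?_ ?_
  · rw [Prod.fst_add, Prod.fst_sum]
    simp only [Prod.smul_fst, Prod.smul_snd, smul_zero]
    rw [sum_single_comp f (fun i => i + 1) (fun j => j - 1)
      (fun j => by ring) (fun i => by ring)]
    funext j; simp
  · rw [Prod.snd_add, Prod.snd_sum]
    simp

theorem Mp_sr0 (ρ : Representation ℤ (DihedralGroup n) ((ZMod n → ℤ) × ℤ))
    (hτ : ∀ i : ZMod n, ρ (sr 0) (Pi.single i 1, 0) = (Pi.single (-i) 1, 0))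
    (hτw : ρ (sr 0) (0, 1) = (∑ i : ZMod n, Pi.single i 1, -1)) (f : ZMod n → ℤ) (c : ℤ) :
    ρ (sr 0) (f, c) = ((fun j => f (-j) + c), -c) := by
  rw [repM_apply ρ (sr 0) f c, hτw]
  simp only [hτ]
  refine Prod.ext ?_ ?_
  · rw [Prod.fst_add, Prod.fst_sum]
    simp only [Prod.smul_fst, Prod.smul_snd, smul_zero]
    rw [sum_single_comp f (fun i => -i) (fun j => -j)
      (fun j => by ring) (fun i => by ring), sum_single_one]
    funext j; simp [mul_comm]
  · rw [Prod.snd_add, Prod.snd_sum]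
    simp

theorem Mm_sr0 (ρ : Representation ℤ (DihedralGroup n) ((ZMod n → ℤ) × ℤ))
    (hτ : ∀ i : ZMod n, ρ (sr 0) (Pi.single i 1, 0) = (-Pi.single (-i) 1, 0))
    (hτw : ρ (sr 0) (0, 1) = (-∑ i : ZMod n, Pi.single i 1, 1)) (f : ZMod n → ℤ) (c : ℤ) :
    ρ (sr 0) (f, c) = ((fun j => -f (-j) - c), c) := by
  rw [repM_apply ρ (sr 0) f c, hτw]
  simp only [hτ]
  refine Prod.ext ?_ ?_
  · rw [Prod.fst_add, Prod.fst_sum]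
    simp only [Prod.smul_fst, Prod.smul_snd, smul_zero, smul_neg]
    rw [Finset.sum_neg_distrib, sum_single_comp f (fun i => -i) (fun j => -j)
      (fun j => by ring) (fun i => by ring), sum_single_one]
    funext j; simp [mul_comm]; ring
  · rw [Prod.snd_add, Prod.snd_sum]
    simp

end reps


def EL [NeZero n] (m : ℕ) (hm : n = 2*m+1) :
    (((ZMod n → ℤ) × ℤ) × ((ZMod n → ℤ) × ℤ)) ≃ₗ[ℤ] (DihedralGroup n → ℤ) × (ℤ × ℤ) where
  toFun := eT m
  invFun := iT m
  left_inv := left_inv_aux hm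
  right_inv := right_inv_aux hm
  map_add' x y := by
    refine Prod.ext ?_ (Prod.ext ?_ ?_)
    · funext g; cases g with
      | r i =>
        show eH (x+y) (r i) = (eH x + eH y) (r i)
        simp only [eH_r, Prod.fst_add, Prod.snd_add, Pi.add_apply]
        ring
      | sr i =>
        show eH (x+y) (sr i) = (eH x + eH y) (sr i)
        simp only [eH_sr, Prod.fst_add, Prod.snd_add, Pi.add_apply]
        ring
    · show eP m (x+y) = eP m x + eP m y
      simp only [eP, Prod.fst_add, Prod.snd_add, Pi.add_apply, Finset.sum_add_distrib]
      ring
    · show eP m (x+y) - (x+y).1.2 = (eP m x - x.1.2) + (eP m y - y.1.2)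
      simp only [eP, Prod.fst_add, Prod.snd_add, Pi.add_apply, Finset.sum_add_distrib]
      ring
  map_smul' z x := by
    refine Prod.ext ?_ (Prod.ext ?_ ?_)
    · funext g; cases g with
      | r i =>
        show eH (z • x) (r i) = (z • eH x) (r i)
        simp only [eH_r, Prod.smul_fst, Prod.smul_snd, Pi.smul_apply, smul_eq_mul]
        ring
      | sr i =>
        show eH (z • x) (sr i) = (z • eH x) (sr i)
        simp only [eH_sr, Prod.smul_fst, Prod.smul_snd, Pi.smul_apply, smul_eq_mul]
        ring
    · show eP m (z • x) = z * eP m x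
      simp only [eP, Prod.smul_fst, Prod.smul_snd, Pi.smul_apply, smul_eq_mul]
      rw [← Finset.mul_sum]; ring
    · show eP m (z • x) - (z • x).1.2 = z * (eP m x - x.1.2)
      simp only [eP, Prod.smul_fst, Prod.smul_snd, Pi.smul_apply, smul_eq_mul]
      rw [← Finset.mul_sum]; ring

@[simp] theorem EL_apply [NeZero n] (m : ℕ) (hm : n = 2*m+1)
    (x : ((ZMod n → ℤ) × ℤ) × ((ZMod n → ℤ) × ℤ)) : EL m hm x = eT m x := rfl

end HKY37
open DihedralGroup

/-- **Hoshi–Kang–Yamasaki, Theorem 3.7.**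
Let `n ≥ 3` be an odd integer and `G = Dₙ`, with `σ = r 1` and `τ = sr 0`.
`ρMp` is the `G`-lattice `M̃₊`, `ρMm` is `M̃₋`, `ρR` is the regular lattice `ℤ[G]`
and `ρA` is `ℤ[G/⟨σ⟩]`.  Then `M̃₊ ⊕ M̃₋ ≅ ℤ[G] ⊕ ℤ[G/⟨σ⟩]` as `ℤ[G]`-modules. -/
theorem stmt2 (n : ℕ) (hn : 3 ≤ n) (hodd : Odd n) [NeZero n]
    (ρMp : Representation ℤ (DihedralGroup n) ((ZMod n → ℤ) × ℤ))
    (hMpσ : ∀ i : ZMod n, ρMp (r 1) (Pi.single i 1, 0) = (Pi.single (i + 1) 1, 0))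
    (hMpσw : ρMp (r 1) (0, 1) = (0, 1))
    (hMpτ : ∀ i : ZMod n, ρMp (sr 0) (Pi.single i 1, 0) = (Pi.single (-i) 1, 0))
    (hMpτw : ρMp (sr 0) (0, 1) = (∑ i : ZMod n, Pi.single i 1, -1))
    (ρMm : Representation ℤ (DihedralGroup n) ((ZMod n → ℤ) × ℤ))
    (hMmσ : ∀ i : ZMod n, ρMm (r 1) (Pi.single i 1, 0) = (Pi.single (i + 1) 1, 0))
    (hMmσw : ρMm (r 1) (0, 1) = (0, 1))
    (hMmτ : ∀ i : ZMod n, ρMm (sr 0) (Pi.single i 1, 0) = (-Pi.single (-i) 1, 0))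
    (hMmτw : ρMm (sr 0) (0, 1) = (-∑ i : ZMod n, Pi.single i 1, 1))
    (ρR : Representation ℤ (DihedralGroup n) (DihedralGroup n → ℤ))
    (hR : ∀ (g h : DihedralGroup n), ρR g (Pi.single h 1) = Pi.single (g * h) 1)
    (ρA : Representation ℤ (DihedralGroup n) (ℤ × ℤ))
    (hAσ : ∀ x : ℤ × ℤ, ρA (r 1) x = x)
    (hAτ : ∀ x : ℤ × ℤ, ρA (sr 0) x = (x.2, x.1)) :
    ∃ e : (((ZMod n → ℤ) × ℤ) × ((ZMod n → ℤ) × ℤ)) ≃ₗ[ℤ] (DihedralGroup n → ℤ) × (ℤ × ℤ),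
      ∀ (g : DihedralGroup n) (x : ((ZMod n → ℤ) × ℤ) × ((ZMod n → ℤ) × ℤ)),
        e (ρMp g x.1, ρMm g x.2) = (ρR g (e x).1, ρA g (e x).2) := by
  obtain ⟨m, hm⟩ := hodd
  have hnz : (n : ℤ) = 2*(m:ℤ)+1 := by exact_mod_cast congrArg (Nat.cast : ℕ → ℤ) hm
  refine ⟨HKY37.EL m hm, ?_⟩
  suffices H : ∀ (g : DihedralGroup n) (x : ((ZMod n → ℤ) × ℤ) × ((ZMod n → ℤ) × ℤ)),
      HKY37.eT m (ρMp g x.1, ρMm g x.2) = (ρR g (HKY37.eT m x).1, ρA g (HKY37.eT m x).2) by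
    intro g x
    simpa using H g x
  have key1 : ∀ x : ((ZMod n → ℤ) × ℤ) × ((ZMod n → ℤ) × ℤ),
      HKY37.eT m (ρMp (r 1) x.1, ρMm (r 1) x.2)
        = (ρR (r 1) (HKY37.eT m x).1, ρA (r 1) (HKY37.eT m x).2) := by
    intro x
    obtain ⟨⟨f, c⟩, g, d⟩ := x
    rw [HKY37.Mp_r1 ρMp hMpσ hMpσw, HKY37.Mp_r1 ρMm hMmσ hMmσw, hAσ,
      HKY37.repR_apply ρR hR, HKY37.r_one_inv]
    refine Prod.ext ?_ (Prod.ext ?_ ?_)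
    · funext k
      cases k with
      | r i =>
        show f (i - 1) - c + g (i + 1 - 1) = HKY37.eH ((f,c),(g,d)) (r (-1) * r i)
        rw [r_mul_r, HKY37.eH_r]
        show _ = f (-1 + i) - c + g (-1 + i + 1)
        rw [show i - 1 = -1 + i by ring, show i + 1 - 1 = -1 + i + 1 by ring]
      | sr i =>
        show f (-i - 1) + 2*c - g (-i - 1 - 1) - d = HKY37.eH ((f,c),(g,d)) (r (-1) * sr i)
        rw [r_mul_sr, HKY37.eH_sr]
        show _ = f (-(i - -1)) + 2*c - g (-(i - -1) - 1) - d
        rw [show -i - 1 = -(i - -1) by ring]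
    · show HKY37.eP m ((fun j => f (j-1), c), (fun j => g (j-1), d)) = HKY37.eP m ((f,c),(g,d))
      unfold HKY37.eP
      rw [HKY37.sum_bij_arg f (fun j => j - 1) (fun u v h => by linear_combination h)]
    · show HKY37.eP m ((fun j => f (j-1), c), (fun j => g (j-1), d)) - c
        = HKY37.eP m ((f,c),(g,d)) - c
      unfold HKY37.eP
      rw [HKY37.sum_bij_arg f (fun j => j - 1) (fun u v h => by linear_combination h)]
  have key2 : ∀ x : ((ZMod n → ℤ) × ℤ) × ((ZMod n → ℤ) × ℤ),
      HKY37.eT m (ρMp (sr 0) x.1, ρMm (sr 0) x.2)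
        = (ρR (sr 0) (HKY37.eT m x).1, ρA (sr 0) (HKY37.eT m x).2) := by
    intro x
    obtain ⟨⟨f, c⟩, g, d⟩ := x
    rw [HKY37.Mp_sr0 ρMp hMpτ hMpτw, HKY37.Mm_sr0 ρMm hMmτ hMmτw, hAτ,
      HKY37.repR_apply ρR hR, HKY37.sr_zero_inv]
    refine Prod.ext ?_ (Prod.ext ?_ ?_)
    · funext k
      cases k with
      | r i =>
        show (f (-i) + c) - (-c) + (-g (-(i+1)) - d) = HKY37.eH ((f,c),(g,d)) (sr 0 * r i)
        rw [sr_mul_r, zero_add, HKY37.eH_sr]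
        rw [show -(i+1) = -i - 1 by ring]
        ring
      | sr i =>
        show (f (- -i) + c) + 2*(-c) - (-g (-(-i-1)) - d) - d
            = HKY37.eH ((f,c),(g,d)) (sr 0 * sr i)
        rw [sr_mul_sr, sub_zero, HKY37.eH_r]
        rw [show (- -i : ZMod n) = i by ring, show (-(-i-1) : ZMod n) = i + 1 by ring]
        ring
    · show HKY37.eP m ((fun j => f (-j) + c, -c), (fun j => -g (-j) - d, d))
        = HKY37.eP m ((f,c),(g,d)) - c
      unfold HKY37.eP
      simp only [Finset.sum_add_distrib, HKY37.sum_const_z,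
        HKY37.sum_bij_arg f (fun j => -j) (fun u v h => by linear_combination -h)]
      rw [hnz]; ring
    · show HKY37.eP m ((fun j => f (-j) + c, -c), (fun j => -g (-j) - d, d)) - (-c)
        = HKY37.eP m ((f,c),(g,d))
      unfold HKY37.eP
      simp only [Finset.sum_add_distrib, HKY37.sum_const_z,
        HKY37.sum_bij_arg f (fun j => -j) (fun u v h => by linear_combination -h)]
      rw [hnz]; ring
  have keymul : ∀ g₁ g₂ : DihedralGroup n,
      (∀ x, HKY37.eT m (ρMp g₁ x.1, ρMm g₁ x.2)
        = (ρR g₁ (HKY37.eT m x).1, ρA g₁ (HKY37.eT m x).2)) →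
      (∀ x, HKY37.eT m (ρMp g₂ x.1, ρMm g₂ x.2)
        = (ρR g₂ (HKY37.eT m x).1, ρA g₂ (HKY37.eT m x).2)) →
      ∀ x, HKY37.eT m (ρMp (g₁*g₂) x.1, ρMm (g₁*g₂) x.2)
        = (ρR (g₁*g₂) (HKY37.eT m x).1, ρA (g₁*g₂) (HKY37.eT m x).2) := by
    intro g₁ g₂ h₁ h₂ x
    have hMp : ρMp (g₁*g₂) x.1 = ρMp g₁ (ρMp g₂ x.1) := by
      rw [map_mul]; rfl
    have hMm : ρMm (g₁*g₂) x.2 = ρMm g₁ (ρMm g₂ x.2) := by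
      rw [map_mul]; rfl
    have H1 : HKY37.eT m (ρMp g₁ (ρMp g₂ x.1), ρMm g₁ (ρMm g₂ x.2))
        = (ρR g₁ (HKY37.eT m (ρMp g₂ x.1, ρMm g₂ x.2)).1,
           ρA g₁ (HKY37.eT m (ρMp g₂ x.1, ρMm g₂ x.2)).2) := h₁ (ρMp g₂ x.1, ρMm g₂ x.2)
    rw [hMp, hMm, H1, h₂ x]
    have hRm : ρR g₁ (ρR g₂ ((HKY37.eT m x).1)) = ρR (g₁*g₂) ((HKY37.eT m x).1) := by
      rw [map_mul]; rfl
    have hAm : ρA g₁ (ρA g₂ ((HKY37.eT m x).2)) = ρA (g₁*g₂) ((HKY37.eT m x).2) := by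
      rw [map_mul]; rfl
    rw [← hRm, ← hAm]
  have keyr : ∀ k : ℕ, ∀ x, HKY37.eT m (ρMp (r (k : ZMod n)) x.1, ρMm (r (k : ZMod n)) x.2)
      = (ρR (r (k : ZMod n)) (HKY37.eT m x).1, ρA (r (k : ZMod n)) (HKY37.eT m x).2) := by
    intro k
    induction k with
    | zero =>
      intro x
      have h0 : (r ((0:ℕ) : ZMod n) : DihedralGroup n) = 1 := by
        rw [Nat.cast_zero, ← DihedralGroup.one_def]
      rw [h0]
      simp [map_one, Module.End.one_apply]
    | succ k ih =>
      have hg : (r ((k+1 : ℕ) : ZMod n) : DihedralGroup n) = r (k : ZMod n) * r 1 := by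
        rw [r_mul_r]; push_cast; ring_nf
      rw [hg]
      exact keymul _ _ ih key1
  intro g x
  cases g with
  | r i =>
    have h := keyr i.val x
    rwa [ZMod.natCast_val, ZMod.cast_id] at h
  | sr i =>
    have hri : ∀ x, HKY37.eT m (ρMp (r i) x.1, ρMm (r i) x.2)
        = (ρR (r i) (HKY37.eT m x).1, ρA (r i) (HKY37.eT m x).2) := by
      intro x'
      have h := keyr i.val x'
      rwa [ZMod.natCast_val, ZMod.cast_id] at h
    have h := keymul (sr 0) (r i) key2 hri x
    rwa [sr_mul_r, zero_add] at h
end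

section
/- Let n ≥ 3 be an odd integer. The determinant of the n×n circulant matrix Circ(c₀, c₁, …, c_{n−1}) with c_i = 1 for 0 ≤ i ≤ (n−3)/2 (that is, (n−1)/2 ones) and c_i = 0 for (n−1)/2 ≤ i ≤ n−1 (that is, (n+1)/2 zeros) equals (n−1)/2. -/
/-!
The additive characters `x ↦ ζ ^ (k * x)` of `ZMod n`, `ζ` a primitive `n`-th root of unity,
are eigenvectors of every circulant matrix, so the determinant is `∏ₖ ∑_{t < m} ζ ^ (k * t)`.
The factor at `k = 0` is `m`. For `k ≠ 0` the factor is `(ζ ^ (k * m) - 1) / (ζ ^ k - 1)`, and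
since `2 * m ≡ -1 [MOD n]` the map `k ↦ m * k` permutes the nonzero residues, so these factors
multiply to `1`.
-/

open Matrix Finset AddChar

section FourierMatrix

variable {G R : Type*} [CommRing G] [Fintype G] [DecidableEq G] [CommRing R]

def fourierMatrix (ψ : AddChar G R) : Matrix G G R := Matrix.of fun i j => ψ (i * j)

lemma circulant_mul_fourierMatrix (ψ : AddChar G R) (v : G → R) :
    circulant v * fourierMatrix ψ =
      fourierMatrix ψ * diagonal fun k => ∑ d, v d * ψ (-(d * k)) := by
  ext i k
  rw [mul_diagonal, Matrix.mul_apply]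
  simp only [fourierMatrix, of_apply, circulant_apply, mul_sum]
  refine Fintype.sum_equiv (Equiv.subLeft i) _ _ fun j => ?_
  rw [Equiv.subLeft_apply, mul_left_comm, ← map_add_eq_mul]
  congr 2
  ring

variable [IsDomain R]

lemma fourierMatrix_mul_fourierMatrix_mulShift_neg_one {ψ : AddChar G R} (hψ : ψ.IsPrimitive) :
    fourierMatrix ψ * fourierMatrix (ψ.mulShift (-1)) = (Fintype.card G : R) • 1 := by
  ext i k
  have hexp : ∀ j, i * j + -1 * (j * k) = j * (i - k) := fun j => by ring
  simp only [Matrix.mul_apply, fourierMatrix, of_apply, mulShift_apply, ← map_add_eq_mul, hexp,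
    sum_mulShift _ hψ, Matrix.smul_apply, Matrix.one_apply, sub_eq_zero]
  split_ifs <;> simp

lemma det_fourierMatrix_ne_zero {ψ : AddChar G R} (hψ : ψ.IsPrimitive)
    (hG : (Fintype.card G : R) ≠ 0) : (fourierMatrix ψ).det ≠ 0 := by
  have h := congrArg det (fourierMatrix_mul_fourierMatrix_mulShift_neg_one hψ)
  rw [det_mul, det_smul, det_one, mul_one] at h
  exact left_ne_zero_of_mul (h ▸ pow_ne_zero _ hG)

theorem det_circulant_eq_prod {ψ : AddChar G R} (hψ : ψ.IsPrimitive)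
    (hG : (Fintype.card G : R) ≠ 0) (v : G → R) :
    (circulant v).det = ∏ k, ∑ d, v d * ψ (d * k) := by
  have h := congrArg det (circulant_mul_fourierMatrix ψ v)
  rw [det_mul, det_mul, det_diagonal, mul_comm] at h
  rw [mul_left_cancel₀ (det_fourierMatrix_ne_zero hψ hG) h]
  exact Fintype.prod_equiv (Equiv.neg G) _ _ fun k => by simp [mul_neg]

end FourierMatrix

theorem prod_geom_sum_addChar {G R : Type*} [CommRing G] [Fintype G] [DecidableEq G]
    [CommRing R] [IsDomain R] {ψ : AddChar G R} (hψ : ∀ a, ψ a = 1 → a = 0) {m : ℕ}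
    (hm : IsUnit (m : G)) :
    ∏ k, ∑ t ∈ range m, ψ k ^ t = m := by
  rw [← mul_prod_erase univ _ (mem_univ 0), map_zero_eq_one]
  simp only [one_pow, sum_const, card_range, nsmul_eq_mul, mul_one]
  set S := univ.erase (0 : G)
  have hS : ∏ k ∈ S, (ψ k - 1) ≠ 0 := prod_ne_zero_iff.2 fun k hk =>
    sub_ne_zero.2 fun h => (ne_of_mem_erase hk) (hψ k h)
  have hperm : ∏ k ∈ S, (ψ k ^ m - 1) = ∏ k ∈ S, (ψ k - 1) := by
    refine prod_equiv (Units.mulLeft hm.unit) (fun k => ?_) fun k _ => ?_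
    · simp [S, hm.mul_right_eq_zero]
    · simp [← map_nsmul_eq_pow, nsmul_eq_mul]
  suffices ∏ k ∈ S, ∑ t ∈ range m, ψ k ^ t = 1 by rw [this, mul_one]
  refine mul_right_cancel₀ hS ?_
  rw [one_mul, ← prod_mul_distrib, ← hperm]
  exact prod_congr rfl fun k _ => geom_sum_mul _ _

lemma sum_ite_val_lt_mul_addChar {R : Type*} [CommRing R] {n : ℕ} [NeZero n]
    (ψ : AddChar (ZMod n) R) {m : ℕ} (hmn : m ≤ n) (k : ZMod n) :
    ∑ d : ZMod n, (if d.val < m then 1 else 0) * ψ (d * k) = ∑ t ∈ range m, ψ k ^ t := by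
  have hpow : ∀ d : ZMod n, ψ (d * k) = ψ k ^ d.val := fun d => by
    rw [← map_nsmul_eq_pow, nsmul_eq_mul, ZMod.natCast_zmod_val]
  simp only [hpow, ite_mul, one_mul, zero_mul, ← sum_filter]
  have hval : ∀ t ∈ range m, (t : ZMod n).val = t := fun t ht =>
    ZMod.val_natCast_of_lt ((mem_range.1 ht).trans_le hmn)
  refine sum_nbij' ZMod.val (↑) (fun d hd => by simpa using hd) (fun t ht => ?_)
    (fun d _ => ZMod.natCast_zmod_val d) hval fun d _ => rfl
  simpa [hval t ht] using ht

theorem stmt3_general (m : ℕ) :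
    (Matrix.circulant (fun i : ZMod (2 * m + 1) => if i.val < m then (1 : ℤ) else 0)).det
      = m := by
  have hζ := Complex.isPrimitiveRoot_exp (2 * m + 1) (by omega)
  set ψ := zmodChar (2 * m + 1) hζ.pow_eq_one
  have hψ : ψ.IsPrimitive := zmodChar_primitive_of_primitive_root _ hζ
  have hm : IsUnit (m : ZMod (2 * m + 1)) := by
    have hn := ZMod.natCast_self (2 * m + 1)
    push_cast at hn
    exact IsUnit.of_mul_eq_one (-2) (by linear_combination -hn)
  have hcard : (Fintype.card (ZMod (2 * m + 1)) : ℂ) ≠ 0 := by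
    rw [ZMod.card]
    exact Nat.cast_ne_zero.2 (by omega)
  apply Int.cast_injective (α := ℂ)
  rw [Int.cast_det, map_circulant, det_circulant_eq_prod hψ hcard]
  simp only [apply_ite (Int.cast : ℤ → ℂ), Int.cast_one, Int.cast_zero,
    sum_ite_val_lt_mul_addChar ψ (by omega : m ≤ 2 * m + 1)]
  exact_mod_cast prod_geom_sum_addChar (fun a => (hψ.zmod_char_eq_one_iff _ a).1) hm

/-- **Hoshi–Kang–Yamasaki, Lemma 3.6(1).**
Let `n = 2m+1 ≥ 3` be an odd integer.  The determinant of the `n × n` circulant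
matrix whose first column consists of `(n-1)/2 = m` ones followed by `(n+1)/2 = m+1`
zeros equals `(n-1)/2 = m`. -/
theorem stmt3 (m : ℕ) (hm : 1 ≤ m) :
    (Matrix.circulant (fun i : ZMod (2 * m + 1) => if i.val < m then (1 : ℤ) else 0)).det
      = m :=
  stmt3_general m
end

section
/- Let n ≥ 3 be an odd integer. The determinant of the n×n circulant matrix Circ(c₀, c₁, …, c_{n−1}) with c_i = −1 for 0 ≤ i ≤ (n−3)/2 (that is, (n−1)/2 entries equal to −1), c_{(n−1)/2} = 0, c_i = 1 for (n+1)/2 ≤ i ≤ n−2 (that is, (n−3)/2 ones), and c_{n−1} = 0, equals −1. -/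
/-!
The discrete Fourier transform diagonalises circulant matrices, so the determinant is the product
of the symbol `f(x) = ∑ cᵢ xⁱ` over the `n`-th roots of unity. For the present coefficients
`x f(x) = -(1 + x)(1 + x + ⋯ + xᵐ) + (1 + x + ⋯ + x²ᵐ)`: hence `f(1) = -1`, and at a root
`ω ≠ 1` the last sum vanishes. As `n` is odd, the roots `ω ≠ 1` multiply to `1`, and for `a`
coprime to `n` so do the values `1 + ω + ⋯ + ω^(a-1) = (1 - ωᵃ) / (1 - ω)`, because `ω ↦ ωᵃ`
permutes them. Taking `a = 2` and `a = m + 1` gives `det = -1`.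
-/

open Finset Matrix AddChar

namespace Matrix

section DFT

variable {n : ℕ} [NeZero n] {R : Type*} [CommRing R]

def dftMatrix (ψ : AddChar (ZMod n) R) : Matrix (ZMod n) (ZMod n) R :=
  of fun i k => ψ (-(i * k))

theorem circulant_mul_dftMatrix (ψ : AddChar (ZMod n) R) (c : ZMod n → R) :
    circulant c * dftMatrix ψ = dftMatrix ψ * diagonal fun k => ∑ j, c j * ψ (j * k) := by
  ext i k
  rw [mul_diagonal, mul_apply, mul_sum]
  refine Fintype.sum_equiv (Equiv.subLeft i) _ _ fun l => ?_
  simp only [circulant_apply, dftMatrix, of_apply, Equiv.subLeft_apply]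
  rw [mul_left_comm, ← map_add_eq_mul]
  congr 2
  ring

theorem dftMatrix_mul_dftMatrix_inv [IsDomain R] {ψ : AddChar (ZMod n) R} (hψ : ψ.IsPrimitive) :
    dftMatrix ψ * dftMatrix ψ⁻¹ = (n : R) • (1 : Matrix (ZMod n) (ZMod n) R) := by
  ext i l
  simp only [mul_apply, dftMatrix, of_apply, inv_apply, neg_neg, smul_apply, one_apply,
    smul_eq_mul, ← map_add_eq_mul]
  have h (k : ZMod n) : -(i * k) + k * l = k * (l - i) := by ring
  simp only [h, sum_mulShift _ hψ, sub_eq_zero, eq_comm (a := l), ZMod.card]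
  split_ifs <;> simp

theorem det_dftMatrix_ne_zero [IsDomain R] {ψ : AddChar (ZMod n) R} (hψ : ψ.IsPrimitive)
    (hn : (n : R) ≠ 0) : (dftMatrix ψ).det ≠ 0 := by
  have h := congrArg det (dftMatrix_mul_dftMatrix_inv hψ)
  rw [det_mul, det_smul, det_one, mul_one, ZMod.card] at h
  exact left_ne_zero_of_mul (h ▸ pow_ne_zero n hn)

theorem det_circulant_eq_prod_addChar [IsDomain R] {ψ : AddChar (ZMod n) R}
    (hψ : ψ.IsPrimitive) (hn : (n : R) ≠ 0) (c : ZMod n → R) :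
    (circulant c).det = ∏ k, ∑ j, c j * ψ (j * k) := by
  have h := congrArg det (circulant_mul_dftMatrix ψ c)
  rw [det_mul, det_mul, det_diagonal, mul_comm] at h
  exact mul_left_cancel₀ (det_dftMatrix_ne_zero hψ hn) h

end DFT

theorem det_circulant_eq_prod_range {R : Type*} [CommRing R] [IsDomain R] {n : ℕ} {ζ : R}
    (hζ : IsPrimitiveRoot ζ (n + 1)) (a : ℕ → R) :
    (circulant fun i : ZMod (n + 1) => a i.val).det =
      ∏ k ∈ range (n + 1), ∑ j ∈ range (n + 1), a j * ζ ^ (j * k) := by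
  have := hζ.neZero'
  rw [det_circulant_eq_prod_addChar (zmodChar_primitive_of_primitive_root _ hζ) (NeZero.ne _)]
  simp only [zmodChar_apply, ZMod.val_mul, ← pow_eq_pow_mod _ hζ.pow_eq_one]
  simp only [← Fin.sum_univ_eq_sum_range, ← Fin.prod_univ_eq_prod_range]
  -- `ZMod (n + 1)` is `Fin (n + 1)` by definition, and `ZMod.val` is `Fin.val` there.
  rfl

end Matrix

namespace IsPrimitiveRoot

variable {R : Type*} [CommRing R] [IsDomain R] {n : ℕ} {ζ : R}

theorem prod_geom_sum_pow_eq_one (hζ : IsPrimitiveRoot ζ (n + 1)) {a : ℕ}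
    (ha : a.Coprime (n + 1)) : ∏ k ∈ range n, ∑ i ∈ range a, (ζ ^ (k + 1)) ^ i = 1 := by
  have h := (hζ.pow_of_coprime a ha).prod_one_sub_pow_eq_order
  have hfactor (k : ℕ) : 1 - (ζ ^ a) ^ (k + 1) =
      (1 - ζ ^ (k + 1)) * ∑ i ∈ range a, (ζ ^ (k + 1)) ^ i := by
    rw [mul_neg_geom_sum, pow_right_comm]
  rw [prod_congr rfl fun k _ => hfactor k, prod_mul_distrib,
    hζ.prod_one_sub_pow_eq_order] at h
  have := hζ.neZero'
  exact (mul_eq_left₀ (by exact_mod_cast NeZero.ne ((n + 1 : ℕ) : R))).mp h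

theorem geom_sum_pow_eq_zero (hζ : IsPrimitiveRoot ζ (n + 1)) {k : ℕ} (hk : k < n) :
    ∑ i ∈ range (n + 1), (ζ ^ (k + 1)) ^ i = 0 := by
  have hne : ζ ^ (k + 1) - 1 ≠ 0 :=
    sub_ne_zero.mpr (hζ.pow_ne_one_of_pos_of_lt k.succ_ne_zero (by omega))
  refine (mul_eq_zero.mp ?_).resolve_right hne
  rw [geom_sum_mul, ← pow_mul, mul_comm, pow_mul, hζ.pow_eq_one, one_pow, sub_self]

end IsPrimitiveRoot

theorem prod_range_pow_eq_one_of_odd {M : Type*} [CommMonoid M] {ζ : M} {n : ℕ} (hn : Odd n)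
    (hζ : ζ ^ n = 1) : ∏ k ∈ range n, ζ ^ k = 1 := by
  obtain ⟨m, rfl⟩ := hn
  have hsum : ∑ k ∈ range (2 * m + 1), k = (2 * m + 1) * m := by
    have := sum_range_id_mul_two (2 * m + 1)
    rw [Nat.add_sub_cancel] at this
    linarith
  rw [prod_pow_eq_pow_sum, hsum, pow_mul, hζ, one_pow]

namespace OddCirculant

def coeff (m i : ℕ) : ℤ := if i < m then -1 else if m < i ∧ i < 2 * m then 1 else 0

variable {R : Type*} [CommRing R]

def symbol (m : ℕ) (ω : R) : R := ∑ i ∈ range (2 * m + 1), (coeff m i : R) * ω ^ i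

theorem symbol_succ (k : ℕ) (ω : R) :
    symbol (k + 1) ω = -∑ i ∈ range (k + 1), ω ^ i + ω ^ (k + 2) * ∑ i ∈ range k, ω ^ i := by
  rw [symbol, show 2 * (k + 1) + 1 = (k + 1) + (k + 1 + 1) by ring, sum_range_add,
    sum_range_succ' (fun i => (coeff (k + 1) (k + 1 + i) : R) * ω ^ (k + 1 + i)),
    sum_range_succ (fun i => (coeff (k + 1) (k + 1 + (i + 1)) : R) * ω ^ (k + 1 + (i + 1))),
    mul_sum, ← sum_neg_distrib]
  have hneg : ∀ i ∈ range (k + 1), (coeff (k + 1) i : R) * ω ^ i = -ω ^ i := fun i hi => by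
    simp [coeff, mem_range.mp hi]
  have hpos : ∀ i ∈ range k, (coeff (k + 1) (k + 1 + (i + 1)) : R) * ω ^ (k + 1 + (i + 1)) =
      ω ^ (k + 2) * ω ^ i := fun i hi => by
    rw [coeff, if_neg (by omega), if_pos (by have := mem_range.mp hi; omega)]
    push_cast; ring
  rw [sum_congr rfl hneg, sum_congr rfl hpos, coeff, coeff, if_neg (by omega), if_neg (by omega),
    if_neg (by omega), if_neg (by omega)]
  push_cast; ring

theorem mul_symbol (m : ℕ) (hm : 1 ≤ m) (ω : R) :
    ω * symbol m ω =
      -((ω + 1) * ∑ i ∈ range (m + 1), ω ^ i) + ∑ i ∈ range (2 * m + 1), ω ^ i := by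
  obtain ⟨k, rfl⟩ := Nat.exists_eq_add_of_le' hm
  have hsplit : ∑ i ∈ range (2 * (k + 1) + 1), ω ^ i =
      ∑ i ∈ range (k + 2), ω ^ i + ω ^ (k + 2) * ∑ i ∈ range (k + 1), ω ^ i := by
    rw [show 2 * (k + 1) + 1 = (k + 2) + (k + 1) by ring, sum_range_add, mul_sum]
    simp only [pow_add]
  rw [symbol_succ, hsplit, geom_sum_succ (n := k + 1), geom_sum_succ (n := k)]
  linear_combination ω ^ 2 * geom_sum_mul ω k

theorem symbol_one (m : ℕ) (hm : 1 ≤ m) : symbol m (1 : R) = -1 := by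
  have h := mul_symbol m hm (1 : R)
  simp only [one_pow, sum_const, card_range, nsmul_eq_mul, mul_one, one_mul] at h
  rw [h]
  push_cast
  ring

theorem prod_symbol_pow [IsDomain R] (m : ℕ) (hm : 1 ≤ m) {ζ : R}
    (hζ : IsPrimitiveRoot ζ (2 * m + 1)) : ∏ k ∈ range (2 * m + 1), symbol m (ζ ^ k) = -1 := by
  have hroots : ∏ k ∈ range (2 * m), ζ ^ (k + 1) = 1 := by
    simpa [prod_range_succ'] using
      prod_range_pow_eq_one_of_odd (odd_two_mul_add_one m) hζ.pow_eq_one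
  have hsymbol : ∀ k ∈ range (2 * m), ζ ^ (k + 1) * symbol m (ζ ^ (k + 1)) =
      -((∑ i ∈ range 2, (ζ ^ (k + 1)) ^ i) * ∑ i ∈ range (m + 1), (ζ ^ (k + 1)) ^ i) :=
    fun k hk => by
      rw [mul_symbol m hm, hζ.geom_sum_pow_eq_zero (mem_range.mp hk), add_zero, geom_sum_two]
  have hcoprime : (m + 1).Coprime (2 * m + 1) := by
    rw [show 2 * m + 1 = m + (m + 1) by ring, Nat.coprime_add_self_right]
    simp
  calc ∏ k ∈ range (2 * m + 1), symbol m (ζ ^ k)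
      = (∏ k ∈ range (2 * m), ζ ^ (k + 1) * symbol m (ζ ^ (k + 1))) * symbol m 1 := by
        rw [prod_range_succ', prod_mul_distrib, hroots, one_mul, pow_zero]
    _ = -1 := by
        rw [prod_congr rfl hsymbol, prod_neg, prod_mul_distrib, card_range,
          hζ.prod_geom_sum_pow_eq_one (by simp), hζ.prod_geom_sum_pow_eq_one hcoprime,
          symbol_one m hm]
        simp

end OddCirculant

/-- **Hoshi–Kang–Yamasaki, Lemma 3.6(2).**
Let `n = 2m+1 ≥ 3` be an odd integer.  The determinant of the `n × n` circulant
matrix whose first column consists of `(n-1)/2 = m` entries `-1`, then a `0`, then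
`(n-3)/2 = m-1` ones, then a final `0`, equals `-1`. -/
theorem stmt4 (m : ℕ) (hm : 1 ≤ m) :
    (Matrix.circulant (fun i : ZMod (2 * m + 1) =>
      if i.val < m then (-1 : ℤ) else if m < i.val ∧ i.val < 2 * m then 1 else 0)).det
      = -1 := by
  obtain ⟨ζ, hζ⟩ : ∃ ζ : ℂ, IsPrimitiveRoot ζ (2 * m + 1) :=
    ⟨_, Complex.isPrimitiveRoot_exp _ (by omega)⟩
  apply Int.cast_injective (α := ℂ)
  rw [Int.cast_det, Matrix.map_circulant, Int.cast_neg, Int.cast_one,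
    ← OddCirculant.prod_symbol_pow m hm hζ]
  exact (Matrix.det_circulant_eq_prod_range hζ fun i => (OddCirculant.coeff m i : ℂ)).trans
    (by simp only [OddCirculant.symbol, pow_mul'])
end

section
/- Let n ≥ 3 be an odd integer and G = D_n the dihedral group of order 2n. There exist short exact sequences of G-lattices 0 → N₋ → M₊ → ℤ → 0 and 0 → N₊ → M₋ → ℤ₋ → 0, and neither of these sequences splits as a sequence of ℤ[G]-modules. -/
/-!
The map `N → M` is `u_k ↦ w_k - w_{k+2}`: extend by zero at `w_{-1}`, then apply the difference
operator `z ↦ z - z(· - 2)` on `ℤ^(ℤ/n)`. As `n` is odd, `2` generates `ℤ/n`, so this operator has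
the constants as kernel and the kernel of the augmentation as image; since every constant is
determined by its value at `-1`, the composite is injective with the same image. Equivariance only
has to be checked on `σ = r 1` and `τ = sr 0`, which generate `Dₙ`. A splitting would provide a
`σ`-fixed, hence constant, vector of `M` with coordinate sum `1`; but that sum is divisible by `n`.
-/

open DihedralGroup

namespace DihedralGroup

variable {n : ℕ} [NeZero n]

theorem closure_r_one_sr_zero :
    Submonoid.closure ({r 1, sr 0} : Set (DihedralGroup n)) = ⊤ := by
  refine eq_top_iff.2 fun g _ => ?_
  have hr (i : ZMod n) : r i ∈ Submonoid.closure ({r 1, sr 0} : Set (DihedralGroup n)) := by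
    rw [← ZMod.natCast_zmod_val i, ← r_one_pow]
    exact pow_mem (Submonoid.subset_closure (by simp)) _
  cases g with
  | r i => exact hr i
  | sr i =>
    rw [← zero_add i, ← sr_mul_r]
    exact mul_mem (Submonoid.subset_closure (by simp)) (hr i)

theorem isIntertwiningMap_of_r_one_of_sr_zero {k A B : Type*} [CommSemiring k]
    [AddCommMonoid A] [Module k A] [AddCommMonoid B] [Module k B]
    {ρ : Representation k (DihedralGroup n) A} {ρ' : Representation k (DihedralGroup n) B}
    {F : A →ₗ[k] B} (hr : F ∘ₗ ρ (r 1) = ρ' (r 1) ∘ₗ F)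
    (hsr : F ∘ₗ ρ (sr 0) = ρ' (sr 0) ∘ₗ F) : Representation.IsIntertwiningMap ρ ρ' F := by
  suffices h : ∀ g, F ∘ₗ ρ g = ρ' g ∘ₗ F from ⟨fun g v => LinearMap.congr_fun (h g) v⟩
  intro g
  have hg : g ∈ Submonoid.closure ({r 1, sr 0} : Set (DihedralGroup n)) := by
    rw [closure_r_one_sr_zero]; trivial
  induction hg using Submonoid.closure_induction with
  | mem g hg => rcases hg with rfl | rfl <;> assumption
  | one => rw [map_one, map_one]; rfl
  | mul g h _ _ hg hh =>
    simp only [map_mul, Module.End.mul_eq_comp, ← LinearMap.comp_assoc, hg]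
    simp only [LinearMap.comp_assoc, hh]

end DihedralGroup

theorem Function.Injective.extend_single {α β γ : Type*} [DecidableEq α] [DecidableEq β] [Zero γ]
    {f : α → β} (hf : Function.Injective f) (a : α) (c : γ) :
    Function.extend f (Pi.single a c) 0 = Pi.single (f a) c := by
  funext b
  by_cases hb : ∃ a', f a' = b
  · obtain ⟨a', rfl⟩ := hb
    rw [hf.extend_apply]
    simp only [Pi.single_apply, hf.eq_iff]
  · rw [Function.extend_apply' _ _ _ hb, Pi.single_apply, if_neg fun h => hb ⟨a, h.symm⟩,
      Pi.zero_apply]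

namespace ZMod

theorem exists_nsmul_eq_of_isUnit {n : ℕ} [NeZero n] {c : ZMod n} (hc : IsUnit c)
    (a : ZMod n) : ∃ k : ℕ, k • c = a := by
  obtain ⟨u, rfl⟩ := hc
  exact ⟨(a * ↑u⁻¹).val, by simp [nsmul_eq_mul, mul_assoc]⟩

theorem isUnit_two_of_odd {n : ℕ} (hn : Odd n) : IsUnit (2 : ZMod n) := by
  simpa using (ZMod.isUnit_iff_coprime 2 n).2 (Nat.coprime_two_left.2 hn)

end ZMod

namespace DihedralLattice

section Difference

variable {R : Type*} [CommRing R]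

def augmentation {ι : Type*} [Fintype ι] : (ι → R) →ₗ[R] R where
  toFun z := ∑ i, z i
  map_add' _ _ := Finset.sum_add_distrib
  map_smul' _ _ := (Finset.mul_sum _ _ _).symm

theorem augmentation_apply {ι : Type*} [Fintype ι] (z : ι → R) : augmentation z = ∑ i, z i := rfl

theorem augmentation_surjective {ι : Type*} [Fintype ι] [DecidableEq ι] [Nonempty ι] :
    Function.Surjective (augmentation : (ι → R) →ₗ[R] R) :=
  fun m => ⟨Pi.single (Classical.arbitrary ι) m, Fintype.sum_pi_single' _ m⟩

theorem augmentation_single {ι : Type*} [Fintype ι] [DecidableEq ι] (i : ι) (m : R) :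
    augmentation (Pi.single i m) = m :=
  Fintype.sum_pi_single' i m

variable {A : Type*} [AddCommGroup A]

def diffOp (c : A) : (A → R) →ₗ[R] A → R :=
  LinearMap.id - LinearMap.funLeft R R (· - c)

theorem diffOp_apply (c : A) (z : A → R) (a : A) : diffOp c z a = z a - z (a - c) := rfl

theorem diffOp_single [DecidableEq A] (c a : A) :
    diffOp c (Pi.single a (1 : R)) = Pi.single a 1 - Pi.single (a + c) 1 := by
  ext b
  simp [diffOp_apply, Pi.single_apply, sub_eq_iff_eq_add]

theorem diffOp_const (c : A) (m : R) : diffOp c (fun _ => m) = 0 := by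
  ext
  simp [diffOp_apply]

theorem augmentation_comp_diffOp [Fintype A] (c : A) :
    augmentation ∘ₗ diffOp c = (0 : (A → R) →ₗ[R] R) := by
  ext z
  simp only [LinearMap.comp_apply, augmentation_apply, diffOp_apply, Finset.sum_sub_distrib,
    LinearMap.zero_apply, sub_eq_zero]
  exact (Equiv.subRight c).sum_comp z |>.symm

theorem apply_add_nsmul_of_diffOp_eq_zero {c : A} {z : A → R} (hz : diffOp c z = 0)
    (a : A) (k : ℕ) : z (a + k • c) = z a := by
  induction k with
  | zero => simp
  | succ k ih =>
    have h := congrFun hz (a + (k + 1) • c)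
    rw [diffOp_apply, Pi.zero_apply, succ_nsmul, ← add_assoc, add_sub_cancel_right,
      sub_eq_zero] at h
    rw [succ_nsmul, ← add_assoc, h, ih]

theorem eq_of_diffOp_eq_zero {c : A} (hc : ∀ a : A, ∃ k : ℕ, k • c = a) {z : A → R}
    (hz : diffOp c z = 0) (a b : A) : z a = z b := by
  obtain ⟨k, hk⟩ := hc (a - b)
  rw [← apply_add_nsmul_of_diffOp_eq_zero hz b k, hk, add_sub_cancel]

theorem single_sub_single_mem_range_diffOp [DecidableEq A] (c a : A) (k : ℕ) :
    (Pi.single a 1 - Pi.single (a + k • c) 1 : A → R) ∈ LinearMap.range (diffOp c) := by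
  induction k with
  | zero => simp
  | succ k ih =>
    have h := LinearMap.mem_range_self (diffOp (R := R) c) (Pi.single (a + k • c) 1)
    rw [diffOp_single] at h
    convert add_mem ih h using 1
    rw [succ_nsmul, add_assoc]
    abel

theorem range_diffOp [Fintype A] [DecidableEq A] {c : A} (hc : ∀ a : A, ∃ k : ℕ, k • c = a) :
    LinearMap.range (diffOp c) = LinearMap.ker (augmentation : (A → R) →ₗ[R] R) := by
  refine le_antisymm (LinearMap.range_le_ker_iff.2 (augmentation_comp_diffOp c)) fun y hy => ?_
  have hy : ∑ a, y a = 0 := hy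
  have hdecomp : y = ∑ a, y a • (Pi.single a (1 : R) - Pi.single 0 1) := by
    simp only [smul_sub, Finset.sum_sub_distrib, ← Finset.sum_smul, hy, zero_smul, sub_zero]
    ext b
    simp [Finset.sum_apply, Pi.single_apply]
  rw [hdecomp]
  refine Submodule.sum_mem _ fun a _ => Submodule.smul_mem _ _ ?_
  obtain ⟨k, hk⟩ := hc (-a)
  simpa [hk] using single_sub_single_mem_range_diffOp (R := R) c a k

end Difference

variable {n : ℕ}

def finToZMod (n : ℕ) (k : Fin (n - 1)) : ZMod n := ((k : ℕ) : ZMod n)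

theorem finToZMod_injective : Function.Injective (finToZMod n) := by
  intro a b h
  have hmod := (ZMod.natCast_eq_natCast_iff' _ _ _).1 h
  rw [Nat.mod_eq_of_lt (by have := a.isLt; omega), Nat.mod_eq_of_lt (by have := b.isLt; omega)]
    at hmod
  exact Fin.ext hmod

theorem range_finToZMod [NeZero n] : Set.range (finToZMod n) = {-1}ᶜ := by
  ext j
  simp only [Set.mem_range, Set.mem_compl_singleton_iff]
  constructor
  · rintro ⟨k, rfl⟩ hk
    have hdvd : (((k : ℕ) + 1 : ℕ) : ZMod n) = 0 := by
      rw [Nat.cast_succ, show ((k : ℕ) : ZMod n) = -1 from hk, neg_add_cancel]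
    have := Nat.le_of_dvd (Nat.succ_pos _) ((ZMod.natCast_eq_zero_iff _ _).1 hdvd)
    omega
  · intro hj
    have hval : j.val + 1 ≠ n := by
      intro h
      apply hj
      have hzero : ((j.val + 1 : ℕ) : ZMod n) = 0 := by rw [h, ZMod.natCast_self]
      rw [Nat.cast_succ, ZMod.natCast_zmod_val] at hzero
      exact eq_neg_of_add_eq_zero_left hzero
    exact ⟨⟨j.val, by have := j.val_lt; omega⟩, ZMod.natCast_zmod_val j⟩

theorem finToZMod_succ (k : Fin (n - 1)) (hk : (k : ℕ) + 1 < n - 1) :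
    finToZMod n ⟨k + 1, hk⟩ = finToZMod n k + 1 := by
  simp [finToZMod]

theorem finToZMod_sub_two (hn : 2 ≤ n) (hk : n - 2 < n - 1) :
    finToZMod n ⟨n - 2, hk⟩ = -2 := by
  simp [finToZMod, Nat.cast_sub hn]

theorem finToZMod_rev (k : Fin (n - 1)) : finToZMod n k.rev = -finToZMod n k - 2 := by
  have hsum : (k.rev : ℕ) + ((k : ℕ) + 2) = n := by
    have := k.isLt
    simp only [Fin.val_rev]
    omega
  have hzero := congrArg (fun m : ℕ => (m : ZMod n)) hsum
  simp only [Nat.cast_add, Nat.cast_ofNat, ZMod.natCast_self] at hzero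
  simp only [finToZMod]
  linear_combination hzero

noncomputable def extendByZero (n : ℕ) : (Fin (n - 1) → ℤ) →ₗ[ℤ] ZMod n → ℤ :=
  Function.ExtendByZero.linearMap ℤ (finToZMod n)

theorem extendByZero_apply (x : Fin (n - 1) → ℤ) :
    extendByZero n x = Function.extend (finToZMod n) x 0 := rfl

theorem extendByZero_single (k : Fin (n - 1)) :
    extendByZero n (Pi.single k 1) = Pi.single (finToZMod n k) 1 :=
  finToZMod_injective.extend_single k 1

theorem extendByZero_apply_neg_one [NeZero n] (x : Fin (n - 1) → ℤ) :
    extendByZero n x (-1) = 0 :=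
  Function.extend_apply' _ _ _ (by simp [← Set.mem_range, range_finToZMod])

theorem extendByZero_const [NeZero n] :
    extendByZero n (fun _ => 1) = (fun _ => 1) - Pi.single (-1) 1 := by
  funext j
  by_cases hj : j = -1
  · rw [hj, extendByZero_apply_neg_one]
    simp
  · obtain ⟨k, rfl⟩ : j ∈ Set.range (finToZMod n) := by rwa [range_finToZMod]
    simp [extendByZero_apply, finToZMod_injective.extend_apply, hj]

theorem exists_extendByZero_eq [NeZero n] (z : ZMod n → ℤ) (hz : z (-1) = 0) :
    ∃ x, extendByZero n x = z := by
  refine ⟨z ∘ finToZMod n, funext fun j => ?_⟩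
  by_cases hj : j = -1
  · rw [hj, extendByZero_apply_neg_one, hz]
  · obtain ⟨k, rfl⟩ : j ∈ Set.range (finToZMod n) := by rwa [range_finToZMod]
    exact finToZMod_injective.extend_apply _ _ k

noncomputable def incl (n : ℕ) : (Fin (n - 1) → ℤ) →ₗ[ℤ] ZMod n → ℤ :=
  diffOp 2 ∘ₗ extendByZero n

theorem incl_single (k : Fin (n - 1)) :
    incl n (Pi.single k 1) = Pi.single (finToZMod n k) 1 - Pi.single (finToZMod n k + 2) 1 := by
  rw [incl, LinearMap.comp_apply, extendByZero_single, diffOp_single]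

theorem incl_sum_single [NeZero n] :
    incl n (∑ k, Pi.single k 1) = Pi.single 1 1 - Pi.single (-1) 1 := by
  rw [incl, LinearMap.comp_apply, Finset.univ_sum_single, extendByZero_const, map_sub,
    diffOp_const, diffOp_single, zero_sub, neg_sub, show (-1 : ZMod n) + 2 = 1 by ring]

theorem incl_injective [NeZero n] (hodd : Odd n) : Function.Injective (incl n) := by
  refine (injective_iff_map_eq_zero _).2 fun x hx => ?_
  have hconst :=
    eq_of_diffOp_eq_zero (ZMod.exists_nsmul_eq_of_isUnit (ZMod.isUnit_two_of_odd hodd)) hx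
  have hzero : extendByZero n x = extendByZero n 0 := by
    rw [map_zero]
    exact funext fun j => (hconst j (-1)).trans (extendByZero_apply_neg_one x)
  exact Function.extend_injective finToZMod_injective 0 hzero

theorem range_incl [NeZero n] (hodd : Odd n) :
    LinearMap.range (incl n) = LinearMap.ker augmentation := by
  refine le_antisymm ?_ fun y hy => ?_
  · rw [LinearMap.range_le_ker_iff, incl, ← LinearMap.comp_assoc, augmentation_comp_diffOp,
      LinearMap.zero_comp]
  · rw [← range_diffOp (ZMod.exists_nsmul_eq_of_isUnit (ZMod.isUnit_two_of_odd hodd))] at hy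
    obtain ⟨z, rfl⟩ := hy
    obtain ⟨x, hx⟩ := exists_extendByZero_eq (z - fun _ => z (-1)) (sub_self _)
    exact ⟨x, by rw [incl, LinearMap.comp_apply, hx, map_sub, diffOp_const, sub_zero]⟩

theorem incl_comp_r_one [NeZero n] (hn : 2 ≤ n)
    (ρN : Representation ℤ (DihedralGroup n) (Fin (n - 1) → ℤ))
    (hNσ : ∀ (j : Fin (n - 1)) (h : (j : ℕ) + 1 < n - 1),
      ρN (r 1) (Pi.single j 1) = Pi.single (⟨(j : ℕ) + 1, h⟩ : Fin (n - 1)) 1)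
    (hNσ' : ρN (r 1) (Pi.single (⟨n - 2, by omega⟩ : Fin (n - 1)) 1)
      = -∑ i : Fin (n - 1), Pi.single i 1)
    (ρM : Representation ℤ (DihedralGroup n) (ZMod n → ℤ))
    (hMσ : ∀ i : ZMod n, ρM (r 1) (Pi.single i 1) = Pi.single (i + 1) 1) :
    incl n ∘ₗ ρN (r 1) = ρM (r 1) ∘ₗ incl n := by
  refine (Pi.basisFun ℤ _).ext fun k => ?_
  simp only [LinearMap.comp_apply, Pi.basisFun_apply, incl_single, map_sub, hMσ]
  by_cases hk : (k : ℕ) + 1 < n - 1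
  · rw [hNσ k hk, incl_single, finToZMod_succ, add_right_comm]
  · have hlast : k = ⟨n - 2, by omega⟩ := Fin.ext (show (k : ℕ) = n - 2 by omega)
    rw [hlast, hNσ', map_neg, incl_sum_single, finToZMod_sub_two hn, neg_sub,
      show (-2 : ZMod n) + 1 = -1 by ring, show (-2 : ZMod n) + 2 + 1 = 1 by ring]

theorem incl_comp_sr_zero (ε : ℤ)
    (ρN : Representation ℤ (DihedralGroup n) (Fin (n - 1) → ℤ))
    (hNτ : ∀ j : Fin (n - 1), ρN (sr 0) (Pi.single j 1) = -ε • Pi.single j.rev 1)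
    (ρM : Representation ℤ (DihedralGroup n) (ZMod n → ℤ))
    (hMτ : ∀ i : ZMod n, ρM (sr 0) (Pi.single i 1) = ε • Pi.single (-i) 1) :
    incl n ∘ₗ ρN (sr 0) = ρM (sr 0) ∘ₗ incl n := by
  refine (Pi.basisFun ℤ _).ext fun k => ?_
  simp only [LinearMap.comp_apply, Pi.basisFun_apply, hNτ, map_smul, incl_single, map_sub, hMτ,
    finToZMod_rev, sub_add_cancel, neg_add']
  module

theorem augmentation_comp_r_one [NeZero n]
    (ρM : Representation ℤ (DihedralGroup n) (ZMod n → ℤ))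
    (hMσ : ∀ i : ZMod n, ρM (r 1) (Pi.single i 1) = Pi.single (i + 1) 1)
    (ρZ : Representation ℤ (DihedralGroup n) ℤ) (hZσ : ρZ (r 1) = LinearMap.id) :
    augmentation ∘ₗ ρM (r 1) = ρZ (r 1) ∘ₗ augmentation := by
  refine (Pi.basisFun ℤ _).ext fun i => ?_
  simp [hMσ, hZσ, augmentation_single]

theorem augmentation_comp_sr_zero [NeZero n] (ε : ℤ)
    (ρM : Representation ℤ (DihedralGroup n) (ZMod n → ℤ))
    (hMτ : ∀ i : ZMod n, ρM (sr 0) (Pi.single i 1) = ε • Pi.single (-i) 1)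
    (ρZ : Representation ℤ (DihedralGroup n) ℤ) (hZτ : ρZ (sr 0) = ε • LinearMap.id) :
    augmentation ∘ₗ ρM (sr 0) = ρZ (sr 0) ∘ₗ augmentation := by
  refine (Pi.basisFun ℤ _).ext fun i => ?_
  simp only [LinearMap.comp_apply, Pi.basisFun_apply, hMτ, map_smul, augmentation_single, hZτ,
    LinearMap.smul_apply, LinearMap.id_apply]

theorem r_one_eq_funLeft [NeZero n] (ρM : Representation ℤ (DihedralGroup n) (ZMod n → ℤ))
    (hMσ : ∀ i : ZMod n, ρM (r 1) (Pi.single i 1) = Pi.single (i + 1) 1) :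
    ρM (r 1) = LinearMap.funLeft ℤ ℤ (· - 1) := by
  refine (Pi.basisFun ℤ _).ext fun i => funext fun j => ?_
  simp [hMσ, Pi.single_apply, sub_eq_iff_eq_add]

theorem augmentation_ne_one_of_r_one_fixed [NeZero n] (hn : 2 ≤ n)
    (ρM : Representation ℤ (DihedralGroup n) (ZMod n → ℤ))
    (hMσ : ∀ i : ZMod n, ρM (r 1) (Pi.single i 1) = Pi.single (i + 1) 1)
    {v : ZMod n → ℤ} (hv : ρM (r 1) v = v) : augmentation v ≠ 1 := by
  have hdiff : diffOp 1 v = 0 := by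
    rw [r_one_eq_funLeft ρM hMσ] at hv
    exact funext fun j => sub_eq_zero.2 (congrFun hv j).symm
  have hconst := eq_of_diffOp_eq_zero (ZMod.exists_nsmul_eq_of_isUnit isUnit_one) hdiff
  rw [augmentation_apply, Finset.sum_congr rfl fun j _ => hconst j 0, Finset.sum_const,
    Finset.card_univ, ZMod.card, nsmul_eq_mul]
  intro h
  have := Int.eq_one_of_mul_eq_one_right (Int.natCast_nonneg n) h
  omega

/-- With `ε = 1` and `ρZ` trivial this is `0 → N₋ → M₊ → ℤ → 0`; with `ε = -1` and `ρZ` the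
sign representation it is `0 → N₊ → M₋ → ℤ₋ → 0`. -/
theorem exists_nonsplit_extension [NeZero n] (hn : 2 ≤ n) (hodd : Odd n) (ε : ℤ)
    (ρN : Representation ℤ (DihedralGroup n) (Fin (n - 1) → ℤ))
    (hNσ : ∀ (j : Fin (n - 1)) (h : (j : ℕ) + 1 < n - 1),
      ρN (r 1) (Pi.single j 1) = Pi.single (⟨(j : ℕ) + 1, h⟩ : Fin (n - 1)) 1)
    (hNσ' : ρN (r 1) (Pi.single (⟨n - 2, by omega⟩ : Fin (n - 1)) 1)
      = -∑ i : Fin (n - 1), Pi.single i 1)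
    (hNτ : ∀ j : Fin (n - 1), ρN (sr 0) (Pi.single j 1) = -ε • Pi.single j.rev 1)
    (ρM : Representation ℤ (DihedralGroup n) (ZMod n → ℤ))
    (hMσ : ∀ i : ZMod n, ρM (r 1) (Pi.single i 1) = Pi.single (i + 1) 1)
    (hMτ : ∀ i : ZMod n, ρM (sr 0) (Pi.single i 1) = ε • Pi.single (-i) 1)
    (ρZ : Representation ℤ (DihedralGroup n) ℤ)
    (hZσ : ρZ (r 1) = LinearMap.id) (hZτ : ρZ (sr 0) = ε • LinearMap.id) :
    ∃ (f : (Fin (n - 1) → ℤ) →ₗ[ℤ] (ZMod n → ℤ)) (q : (ZMod n → ℤ) →ₗ[ℤ] ℤ),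
      (∀ (g : DihedralGroup n) x, f (ρN g x) = ρM g (f x)) ∧
      (∀ (g : DihedralGroup n) x, q (ρM g x) = ρZ g (q x)) ∧
      Function.Injective f ∧ Function.Surjective q ∧
      LinearMap.range f = LinearMap.ker q ∧
      ¬ ∃ s : ℤ →ₗ[ℤ] (ZMod n → ℤ),
          (∀ (g : DihedralGroup n) y, ρM g (s y) = s (ρZ g y)) ∧
          q.comp s = LinearMap.id := by
  refine ⟨incl n, augmentation,
    (isIntertwiningMap_of_r_one_of_sr_zero (incl_comp_r_one hn ρN hNσ hNσ' ρM hMσ)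
      (incl_comp_sr_zero ε ρN hNτ ρM hMτ)).isIntertwining,
    (isIntertwiningMap_of_r_one_of_sr_zero (augmentation_comp_r_one ρM hMσ ρZ hZσ)
      (augmentation_comp_sr_zero ε ρM hMτ ρZ hZτ)).isIntertwining,
    incl_injective hodd, augmentation_surjective, range_incl hodd, ?_⟩
  rintro ⟨s, hs, hsection⟩
  refine augmentation_ne_one_of_r_one_fixed hn ρM hMσ ?_ (LinearMap.congr_fun hsection 1)
  rw [hs, hZσ, LinearMap.id_apply]

end DihedralLattice

/-- **Hoshi–Kang–Yamasaki, Lemma 4.4.**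
Let `n ≥ 3` be odd and `G = Dₙ`, with `σ = r 1`, `τ = sr 0`.  `ρMp` is the lattice
`M₊ = ℤ[G/⟨τ⟩]` (free on `w₀,…,w_{n-1}`, `σ·wᵢ = w_{i+1}`, `τ·wᵢ = w_{n-i}`), `ρMm` is
`M₋` (`τ·wᵢ = -w_{n-i}`), `ρNp`/`ρNm` are `N₊`/`N₋` and `ρsgn` is `ℤ₋`.  There are
short exact sequences `0 → N₋ → M₊ → ℤ → 0` and `0 → N₊ → M₋ → ℤ₋ → 0` of
`G`-lattices, and neither splits as a sequence of `ℤ[G]`-modules. -/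
theorem stmt6 (n : ℕ) (hn : 3 ≤ n) (hodd : Odd n) [NeZero n]
    (ρMp : Representation ℤ (DihedralGroup n) (ZMod n → ℤ))
    (hMpσ : ∀ i : ZMod n, ρMp (r 1) (Pi.single i 1) = Pi.single (i + 1) 1)
    (hMpτ : ∀ i : ZMod n, ρMp (sr 0) (Pi.single i 1) = Pi.single (-i) 1)
    (ρMm : Representation ℤ (DihedralGroup n) (ZMod n → ℤ))
    (hMmσ : ∀ i : ZMod n, ρMm (r 1) (Pi.single i 1) = Pi.single (i + 1) 1)
    (hMmτ : ∀ i : ZMod n, ρMm (sr 0) (Pi.single i 1) = -Pi.single (-i) 1)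
    (ρNp : Representation ℤ (DihedralGroup n) (Fin (n - 1) → ℤ))
    (hNpσ : ∀ (j : Fin (n - 1)) (h : (j : ℕ) + 1 < n - 1),
      ρNp (r 1) (Pi.single j 1) = Pi.single (⟨(j : ℕ) + 1, h⟩ : Fin (n - 1)) 1)
    (hNpσ' : ρNp (r 1) (Pi.single (⟨n - 2, by omega⟩ : Fin (n - 1)) 1)
      = -∑ i : Fin (n - 1), Pi.single i 1)
    (hNpτ : ∀ j : Fin (n - 1), ρNp (sr 0) (Pi.single j 1) = Pi.single j.rev 1)
    (ρNm : Representation ℤ (DihedralGroup n) (Fin (n - 1) → ℤ))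
    (hNmσ : ∀ (j : Fin (n - 1)) (h : (j : ℕ) + 1 < n - 1),
      ρNm (r 1) (Pi.single j 1) = Pi.single (⟨(j : ℕ) + 1, h⟩ : Fin (n - 1)) 1)
    (hNmσ' : ρNm (r 1) (Pi.single (⟨n - 2, by omega⟩ : Fin (n - 1)) 1)
      = -∑ i : Fin (n - 1), Pi.single i 1)
    (hNmτ : ∀ j : Fin (n - 1), ρNm (sr 0) (Pi.single j 1) = -Pi.single j.rev 1)
    (ρsgn : Representation ℤ (DihedralGroup n) ℤ)
    (hsgnr : ∀ i : ZMod n, ρsgn (r i) = LinearMap.id)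
    (hsgnsr : ∀ i : ZMod n, ρsgn (sr i) = -LinearMap.id) :
    (∃ (f : (Fin (n - 1) → ℤ) →ₗ[ℤ] (ZMod n → ℤ)) (q : (ZMod n → ℤ) →ₗ[ℤ] ℤ),
      (∀ (g : DihedralGroup n) x, f (ρNm g x) = ρMp g (f x)) ∧
      (∀ (g : DihedralGroup n) x, q (ρMp g x) = q x) ∧
      Function.Injective f ∧ Function.Surjective q ∧
      LinearMap.range f = LinearMap.ker q ∧
      ¬ ∃ s : ℤ →ₗ[ℤ] (ZMod n → ℤ),
          (∀ (g : DihedralGroup n) y, ρMp g (s y) = s y) ∧ q.comp s = LinearMap.id) ∧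
    (∃ (f : (Fin (n - 1) → ℤ) →ₗ[ℤ] (ZMod n → ℤ)) (q : (ZMod n → ℤ) →ₗ[ℤ] ℤ),
      (∀ (g : DihedralGroup n) x, f (ρNp g x) = ρMm g (f x)) ∧
      (∀ (g : DihedralGroup n) x, q (ρMm g x) = ρsgn g (q x)) ∧
      Function.Injective f ∧ Function.Surjective q ∧
      LinearMap.range f = LinearMap.ker q ∧
      ¬ ∃ s : ℤ →ₗ[ℤ] (ZMod n → ℤ),
          (∀ (g : DihedralGroup n) y, ρMm g (s y) = s (ρsgn g y)) ∧
          q.comp s = LinearMap.id) := by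
  refine ⟨?_, DihedralLattice.exists_nonsplit_extension (by omega) hodd (-1) ρNp hNpσ hNpσ'
    (by simpa using hNpτ) ρMm hMmσ (by simpa using hMmτ) ρsgn (hsgnr 1) (by simp [hsgnsr])⟩
  exact DihedralLattice.exists_nonsplit_extension (by omega) hodd 1 ρNm hNmσ hNmσ'
    (by simpa using hNmτ) ρMp hMpσ (by simpa using hMpτ) (Representation.trivial ℤ _ ℤ) rfl
    (by simp)
end
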